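/- arXiv:2301.09457 — 10 statements merged into one kernel-verified Lean document; each statement's English description precedes it below -/
import Mathlib

section
/- For every prime power $q$ and integers $1 \le s \le k$, we have $1 \le q^{-s(k-s)}\binom{k}{s}_q \le \frac{q}{q-1} e^{q/((q^2-1)(q-1))}$. -/
/-!
Dividing the `i`-th factor of `[k choose s]_q` by `q^(k-s)` and writing `x = 1/q` gives
`q^(-s(k-s)) [k choose s]_q = ∏_{i<s} (1 - x^(k-i)) / (1 - x^(s-i))`. Each factor is at least `1`
since `x^(k-i) ≤ x^(s-i)`, and at most `1 / (1 - x^(s-i))`, so the product is bounded by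
the Euler product `∏_{j ≥ 1} 1 / (1 - x^j)`. Its first factor is `q/(q-1)`; every later one
is at most `exp (x^j / (1 - x^2))` because `1/(1-y) ≤ exp (y/(1-y))`, and summing the
geometric series `∑_{j ≥ 2} x^j = x^2/(1-x)` gives the exponent `x^2/((1-x^2)(1-x)) = q/((q^2-1)(q-1))`.
-/

open Finset Real

/-- The Gaussian (q-binomial) coefficient, as a rational number. -/
noncomputable def qbin (q k s : ℕ) : ℚ :=
  (∏ i ∈ Finset.range s, ((q : ℚ) ^ (k - i) - 1)) /
    (∏ i ∈ Finset.range s, ((q : ℚ) ^ (s - i) - 1))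

lemma inv_one_sub_le_exp {y : ℝ} (hy : y < 1) : (1 - y)⁻¹ ≤ exp (y / (1 - y)) := by
  have h : 0 < 1 - y := sub_pos.mpr hy
  calc (1 - y)⁻¹ = y / (1 - y) + 1 := by field_simp; ring
    _ ≤ exp (y / (1 - y)) := add_one_le_exp _

lemma inv_one_sub_pow_le_exp {x : ℝ} (hx₀ : 0 ≤ x) (hx₁ : x < 1) {j : ℕ} (hj : 2 ≤ j) :
    (1 - x ^ j)⁻¹ ≤ exp (x ^ j / (1 - x ^ 2)) := by
  have hxj : x ^ j ≤ x ^ 2 := pow_le_pow_of_le_one hx₀ hx₁.le hj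
  have hx2 : x ^ 2 < 1 := pow_lt_one₀ hx₀ hx₁ two_ne_zero
  calc (1 - x ^ j)⁻¹ ≤ exp (x ^ j / (1 - x ^ j)) := inv_one_sub_le_exp (hxj.trans_lt hx2)
    _ ≤ exp (x ^ j / (1 - x ^ 2)) := by gcongr

lemma prod_range_inv_one_sub_pow_add_two_le {x : ℝ} (hx₀ : 0 ≤ x) (hx₁ : x < 1) (n : ℕ) :
    ∏ j ∈ range n, (1 - x ^ (j + 2))⁻¹ ≤ exp (x ^ 2 / ((1 - x ^ 2) * (1 - x))) := by
  have hx2 : 0 < 1 - x ^ 2 := sub_pos.mpr (pow_lt_one₀ hx₀ hx₁ two_ne_zero)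
  have hgeom : ∑ j ∈ range n, x ^ j ≤ (1 - x)⁻¹ := by
    have := geom_sum_Ico_le_of_lt_one (m := 0) (n := n) hx₀ hx₁
    rwa [← range_eq_Ico, pow_zero, one_div] at this
  calc ∏ j ∈ range n, (1 - x ^ (j + 2))⁻¹
      ≤ ∏ j ∈ range n, exp (x ^ (j + 2) / (1 - x ^ 2)) := by
        refine prod_le_prod (fun j _ => ?_) fun j _ => inv_one_sub_pow_le_exp hx₀ hx₁ (by omega)
        exact inv_nonneg.mpr (sub_nonneg.mpr (pow_le_one₀ hx₀ hx₁.le))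
    _ = exp (x ^ 2 * (∑ j ∈ range n, x ^ j) / (1 - x ^ 2)) := by
        rw [← exp_sum, mul_sum, sum_div]
        simp only [pow_add, mul_comm]
    _ ≤ exp (x ^ 2 * (1 - x)⁻¹ / (1 - x ^ 2)) := by gcongr
    _ = exp (x ^ 2 / ((1 - x ^ 2) * (1 - x))) := by
        rw [div_mul_eq_div_div_swap, div_eq_mul_inv (x ^ 2)]

lemma prod_range_inv_one_sub_pow_succ_le {x : ℝ} (hx₀ : 0 ≤ x) (hx₁ : x < 1) (n : ℕ) :
    ∏ j ∈ range n, (1 - x ^ (j + 1))⁻¹ ≤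
      (1 - x)⁻¹ * exp (x ^ 2 / ((1 - x ^ 2) * (1 - x))) := by
  have hx : 1 ≤ (1 - x)⁻¹ := one_le_inv₀ (by linarith) |>.mpr (by linarith)
  cases n with
  | zero =>
    have hx2 : 0 < 1 - x ^ 2 := sub_pos.mpr (pow_lt_one₀ hx₀ hx₁ two_ne_zero)
    rw [prod_range_zero]
    exact one_le_mul_of_one_le_of_one_le hx (one_le_exp (by positivity))
  | succ m =>
    rw [prod_range_succ', mul_comm, zero_add, pow_one]
    gcongr
    exact prod_range_inv_one_sub_pow_add_two_le hx₀ hx₁ m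

lemma one_le_prod_range_one_sub_pow_div {x : ℝ} (hx₀ : 0 ≤ x) (hx₁ : x < 1) {k s : ℕ}
    (hsk : s ≤ k) : 1 ≤ ∏ i ∈ range s, (1 - x ^ (k - i)) / (1 - x ^ (s - i)) := by
  refine one_le_prod fun i hi => ?_
  have hi : i < s := mem_range.mp hi
  rw [one_le_div (sub_pos.mpr (pow_lt_one₀ hx₀ hx₁ (by omega)))]
  linarith [pow_le_pow_of_le_one hx₀ hx₁.le (show s - i ≤ k - i by omega)]

lemma prod_range_one_sub_pow_div_le {x : ℝ} (hx₀ : 0 ≤ x) (hx₁ : x ≤ 1) (k s : ℕ) :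
    ∏ i ∈ range s, (1 - x ^ (k - i)) / (1 - x ^ (s - i)) ≤
      ∏ j ∈ range s, (1 - x ^ (j + 1))⁻¹ := by
  have hnonneg : ∀ n : ℕ, 0 ≤ 1 - x ^ n := fun n => sub_nonneg.mpr (pow_le_one₀ hx₀ hx₁)
  rw [← prod_range_reflect (fun j => (1 - x ^ (j + 1))⁻¹)]
  refine prod_le_prod (fun i _ => div_nonneg (hnonneg _) (hnonneg _)) fun i hi => ?_
  rw [show s - 1 - i + 1 = s - i by have := mem_range.mp hi; omega, div_eq_mul_inv]
  exact mul_le_of_le_one_left (inv_nonneg.mpr (hnonneg _)) (sub_le_self _ (pow_nonneg hx₀ _))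

lemma qbin_div_pow_eq_prod {q k s : ℕ} (hq : q ≠ 0) (hsk : s ≤ k) :
    (qbin q k s : ℝ) / (q : ℝ) ^ (s * (k - s)) =
      ∏ i ∈ range s, (1 - (q : ℝ)⁻¹ ^ (k - i)) / (1 - (q : ℝ)⁻¹ ^ (s - i)) := by
  rw [qbin, mul_comm s, pow_mul,
    show ((q : ℝ) ^ (k - s)) ^ s = ∏ _i ∈ range s, (q : ℝ) ^ (k - s) by simp]
  push_cast
  rw [div_div, ← prod_mul_distrib, ← prod_div_distrib]
  refine prod_congr rfl fun i hi => ?_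
  have hi : i < s := mem_range.mp hi
  have hsplit : (q : ℝ) ^ (k - i) = (q : ℝ) ^ (s - i) * (q : ℝ) ^ (k - s) := by
    rw [← pow_add]; congr 1; omega
  rw [inv_pow, inv_pow, hsplit]
  field_simp

theorem qbin_estimate_general (q k s : ℕ) (hq : IsPrimePow q) (hsk : s ≤ k) :
    1 ≤ (qbin q k s : ℝ) / (q : ℝ) ^ (s * (k - s)) ∧
    (qbin q k s : ℝ) / (q : ℝ) ^ (s * (k - s)) ≤
      (q : ℝ) / ((q : ℝ) - 1) * Real.exp ((q : ℝ) / (((q : ℝ) ^ 2 - 1) * ((q : ℝ) - 1))) := by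
  have hq₂ : (2 : ℝ) ≤ q := by exact_mod_cast hq.two_le
  set x : ℝ := (q : ℝ)⁻¹ with hx
  have hx₀ : 0 ≤ x := by positivity
  have hx₁ : x < 1 := inv_lt_one_of_one_lt₀ (by linarith)
  have hfirst : (1 - x)⁻¹ = q / ((q : ℝ) - 1) := by
    rw [hx]; field_simp
  have hexponent : x ^ 2 / ((1 - x ^ 2) * (1 - x)) = q / (((q : ℝ) ^ 2 - 1) * ((q : ℝ) - 1)) := by
    have : (q : ℝ) ^ 2 - 1 ≠ 0 := by nlinarith
    have : (q : ℝ) - 1 ≠ 0 := by linarith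
    rw [hx]; field_simp
  rw [qbin_div_pow_eq_prod hq.ne_zero hsk, ← hfirst, ← hexponent]
  exact ⟨one_le_prod_range_one_sub_pow_div hx₀ hx₁ hsk,
    (prod_range_one_sub_pow_div_le hx₀ hx₁.le k s).trans
      (prod_range_inv_one_sub_pow_succ_le hx₀ hx₁ s)⟩

/-- For every prime power `q` and integers `1 ≤ s ≤ k`,
`1 ≤ q^(-s(k-s)) [k choose s]_q ≤ (q/(q-1)) e^(q/((q²-1)(q-1)))`. -/
theorem qbin_estimate (q k s : ℕ) (hq : IsPrimePow q) (hs : 1 ≤ s) (hsk : s ≤ k) :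
    1 ≤ (qbin q k s : ℝ) / (q : ℝ) ^ (s * (k - s)) ∧
    (qbin q k s : ℝ) / (q : ℝ) ^ (s * (k - s)) ≤
      (q : ℝ) / ((q : ℝ) - 1) * Real.exp ((q : ℝ) / (((q : ℝ) ^ 2 - 1) * ((q : ℝ) - 1))) :=
  qbin_estimate_general q k s hq hsk
end

section
/- For every prime power $q$ and integers $s \ge 3$ and $k \ge s+3$, we have $\frac{q^3}{(q^2-1)(q-1)} \le q^{-s(k-s)}\binom{k}{s}_q$. -/
open Finset

section OrderedField

variable {α : Type*} [Field α] [LinearOrder α] [IsStrictOrderedRing α]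

lemma one_le_pow_add_sub_one_div {x : α} (hx : 1 < x) (s : ℕ) {n : ℕ} (hn : n ≠ 0) :
    1 ≤ (x ^ (s + n) - 1) / (x ^ s * (x ^ n - 1)) := by
  have hxn : 0 < x ^ n - 1 := sub_pos.mpr (one_lt_pow₀ hx hn)
  rw [one_le_div (by positivity), mul_sub_one, ← pow_add]
  linarith [one_le_pow₀ (M₀ := α) hx.le (n := s)]

lemma pow_three_div_le_prod_range_three {x : α} (hx : 2 ≤ x) {s : ℕ} (hs : 3 ≤ s) :
    x ^ 3 / ((x ^ 2 - 1) * (x - 1)) ≤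
      ∏ i ∈ range 3, (x ^ (s + (i + 1)) - 1) / (x ^ s * (x ^ (i + 1) - 1)) := by
  have hx0 : 0 ≤ x := by linarith
  have h1 : 0 < x - 1 := by linarith
  have h2 : 0 < x ^ 2 - 1 := by nlinarith
  have h3 : 0 < x ^ 3 - 1 := by nlinarith
  set t := x ^ s
  have ht : x ^ 3 ≤ t := pow_le_pow_right₀ (by linarith) hs
  have hprod : ∏ i ∈ range 3, (x ^ (s + (i + 1)) - 1) / (t * (x ^ (i + 1) - 1)) =
      (t * x - 1) * (t * x ^ 2 - 1) * (t * x ^ 3 - 1) /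
        (t ^ 3 * ((x - 1) * (x ^ 2 - 1) * (x ^ 3 - 1))) := by
    simp only [prod_range_succ, prod_range_zero, one_mul, pow_add, t]
    field_simp
  -- after the `t³x⁶` terms cancel: `t³x³ ≥ t²x⁶ ≥ t²(x⁵ + x⁴ + x³)` as `t ≥ x³`, `x³ ≥ x² + x + 1`
  have hcubic : 0 ≤ x ^ 3 - x ^ 2 - x - 1 := by nlinarith [mul_nonneg hx0 hx0]
  have key : t ^ 3 * x ^ 3 * (x ^ 3 - 1) ≤ (t * x - 1) * (t * x ^ 2 - 1) * (t * x ^ 3 - 1) := by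
    nlinarith [mul_nonneg (mul_nonneg (sq_nonneg t) (pow_nonneg hx0 3)) (sub_nonneg.mpr ht),
      mul_nonneg (mul_nonneg (sq_nonneg t) (pow_nonneg hx0 3)) hcubic,
      mul_nonneg (sub_nonneg.mpr (one_le_pow₀ (by linarith : (1 : α) ≤ x)) : (0 : α) ≤ t - 1)
        (by positivity : (0 : α) ≤ x ^ 3 + x ^ 2 + x)]
  rw [hprod, div_le_div_iff₀ (by positivity) (by positivity)]
  linarith [mul_le_mul_of_nonneg_left key (by positivity : (0 : α) ≤ (x ^ 2 - 1) * (x - 1))]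

end OrderedField

lemma prod_range_pow_succ_sub_one_ne_zero {q : ℕ} (hq : q ≠ 1) (n : ℕ) :
    ∏ i ∈ range n, ((q : ℚ) ^ (i + 1) - 1) ≠ 0 :=
  prod_ne_zero_iff.mpr fun i _ => sub_ne_zero.mpr fun h =>
    hq (by exact_mod_cast (pow_eq_one_iff_of_nonneg (Nat.cast_nonneg q) i.succ_ne_zero).mp h)

lemma qbin_add_eq_prod_div (q s m : ℕ) (hq : q ≠ 1) :
    qbin q (s + m) s =
      (∏ i ∈ range m, ((q : ℚ) ^ (s + i + 1) - 1)) / ∏ i ∈ range m, ((q : ℚ) ^ (i + 1) - 1) := by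
  have hnum : ∏ i ∈ range s, ((q : ℚ) ^ (s + m - i) - 1) =
      ∏ i ∈ range s, ((q : ℚ) ^ (m + i + 1) - 1) := by
    rw [← prod_range_reflect]
    exact prod_congr rfl fun i hi => by rw [mem_range] at hi; congr 2; omega
  have hden : ∏ i ∈ range s, ((q : ℚ) ^ (s - i) - 1) = ∏ i ∈ range s, ((q : ℚ) ^ (i + 1) - 1) := by
    rw [← prod_range_reflect]
    exact prod_congr rfl fun i hi => by rw [mem_range] at hi; congr 2; omega
  rw [qbin, hnum, hden, div_eq_div_iff (prod_range_pow_succ_sub_one_ne_zero hq s)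
    (prod_range_pow_succ_sub_one_ne_zero hq m)]
  -- both sides are `∏_{i < s + m} (q^(i+1) - 1)`, split at `s` and at `m`
  have hsym := prod_range_add (fun i => (q : ℚ) ^ (i + 1) - 1) s m
  rw [add_comm, prod_range_add] at hsym
  linear_combination hsym

lemma qbin_add_div_pow_eq_prod (q s m : ℕ) (hq : q ≠ 1) :
    qbin q (s + m) s / (q : ℚ) ^ (s * m) =
      ∏ i ∈ range m, ((q : ℚ) ^ (s + (i + 1)) - 1) / ((q : ℚ) ^ s * ((q : ℚ) ^ (i + 1) - 1)) := by
  rw [qbin_add_eq_prod_div q s m hq, prod_div_distrib, prod_mul_distrib, prod_const, card_range,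
    ← pow_mul, div_div, mul_comm ((q : ℚ) ^ (s * m))]
  simp only [add_assoc]

/-- For every prime power `q`, `s ≥ 3` and `k ≥ s + 3`,
`q³/((q²-1)(q-1)) ≤ q^(-s(k-s)) [k choose s]_q`. -/
theorem qbin_lower_estimate (q k s : ℕ) (hq : IsPrimePow q) (hs : 3 ≤ s) (hk : s + 3 ≤ k) :
    (q : ℚ) ^ 3 / (((q : ℚ) ^ 2 - 1) * ((q : ℚ) - 1)) ≤ qbin q k s / (q : ℚ) ^ (s * (k - s)) := by
  have hq2 : (2 : ℚ) ≤ q := by exact_mod_cast hq.two_le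
  have hfactor (n : ℕ) :
      1 ≤ ((q : ℚ) ^ (s + (n + 1)) - 1) / ((q : ℚ) ^ s * ((q : ℚ) ^ (n + 1) - 1)) :=
    one_le_pow_add_sub_one_div (by linarith) s n.succ_ne_zero
  obtain ⟨d, rfl⟩ : ∃ d, k = s + (3 + d) := ⟨k - s - 3, by omega⟩
  rw [Nat.add_sub_cancel_left, qbin_add_div_pow_eq_prod q s _ hq.ne_one, prod_range_add]
  calc _ ≤ ∏ i ∈ range 3, _ := pow_three_div_le_prod_range_three hq2 hs
    _ ≤ _ := le_mul_of_one_le_right (prod_nonneg fun i _ => zero_le_one.trans (hfactor i))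
        (one_le_prod fun i _ => hfactor (3 + i))
end

section
/- Let $H$ be a $(k-s)$-dimensional affine subspace of $\mathbb{F}_q^k$ not passing through the origin. Then the number $n_q(k,s)$ of $s$-dimensional vector subspaces of $\mathbb{F}_q^k$ that are disjoint from $H$ equals $\sum_{i=1}^{s} q^{(s-i)(k-i-s+1)}\binom{s-1}{i-1}_q \binom{k-s}{i}_q$. -/
/-!
Put `X = W ⊔ span {x}`. A subspace `V` misses `x + W` iff `x ∉ V ⊔ W`, iff `V ⊓ X ≤ W`, i.e.
`V ⊓ X = V ⊓ W`. Sort these `V` by `P = V ⊓ W`, say of dimension `i`. Modulo `P`, the `V` with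
`V ⊓ X = P` are the `(s - i)`-dimensional subspaces of `𝔽_q^k ⧸ P` meeting the
`(k - s + 1 - i)`-dimensional subspace `X ⧸ P` trivially. In an `n`-dimensional space there are
`q^(c m) [n - c, m]_q` subspaces of dimension `m` meeting a fixed `c`-dimensional subspace `C`
trivially: count the `m`-tuples that are independent modulo `C` once through the subspace they
span, and once through their images in the quotient by `C`. Each of the `[k - s, i]_q` choices
of `P` thus contributes `q^((k - s + 1 - i)(s - i)) [s - 1, s - i]_q`.
-/

open Finset

section QBinomial

variable {q : ℕ}

theorem qbin_eq_zero_of_lt {n m : ℕ} (h : n < m) : qbin q n m = 0 := by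
  rw [qbin, prod_eq_zero (mem_range.2 h) (by simp), zero_div]

noncomputable def qFactorial (q n : ℕ) : ℚ := ∏ j ∈ range n, ((q : ℚ) ^ (j + 1) - 1)

theorem qFactorial_ne_zero (hq : q ≠ 1) (n : ℕ) : qFactorial q n ≠ 0 :=
  prod_ne_zero_iff.2 fun j _ => sub_ne_zero.2 fun h =>
    hq (by exact_mod_cast (pow_eq_one_iff_of_nonneg (Nat.cast_nonneg q) j.succ_ne_zero).1 h)

theorem prod_range_pow_sub_one_mul_qFactorial {n m : ℕ} (h : m ≤ n) :
    (∏ j ∈ range m, ((q : ℚ) ^ (n - j) - 1)) * qFactorial q (n - m) = qFactorial q n := by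
  obtain ⟨d, rfl⟩ := Nat.exists_eq_add_of_le' h
  rw [qFactorial, qFactorial, Nat.add_sub_cancel, prod_range_add, mul_comm,
    ← prod_range_reflect _ m]
  congr 1
  refine prod_congr rfl fun j hj => ?_
  rw [mem_range] at hj
  congr 2
  omega

theorem qbin_eq_qFactorial (hq : q ≠ 1) {n m : ℕ} (h : m ≤ n) :
    qbin q n m = qFactorial q n / (qFactorial q m * qFactorial q (n - m)) := by
  have hnum := prod_range_pow_sub_one_mul_qFactorial (q := q) h
  have hden := prod_range_pow_sub_one_mul_qFactorial (q := q) (le_refl m)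
  rw [Nat.sub_self, qFactorial, prod_range_zero, mul_one] at hden
  rw [qbin, hden, ← hnum, mul_comm (qFactorial q m), ← div_div,
    mul_div_cancel_right₀ _ (qFactorial_ne_zero hq _)]

theorem qbin_symm (hq : q ≠ 1) {n m : ℕ} (h : m ≤ n) : qbin q n m = qbin q n (n - m) := by
  rw [qbin_eq_qFactorial hq h, qbin_eq_qFactorial hq (n.sub_le m), Nat.sub_sub_self h, mul_comm]

theorem prod_pow_sub_pow_div_prod (hq : q ≠ 0) (n m : ℕ) :
    (∏ j ∈ range m, ((q : ℚ) ^ n - (q : ℚ) ^ j)) / ∏ j ∈ range m, ((q : ℚ) ^ m - (q : ℚ) ^ j) =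
      qbin q n m := by
  rcases le_or_gt m n with h | h
  · have factor : ∀ n, m ≤ n → ∏ j ∈ range m, ((q : ℚ) ^ n - (q : ℚ) ^ j) =
        (∏ j ∈ range m, (q : ℚ) ^ j) * ∏ j ∈ range m, ((q : ℚ) ^ (n - j) - 1) := fun n hn => by
      rw [← prod_mul_distrib]
      refine prod_congr rfl fun j hj => ?_
      rw [mul_sub, mul_one, ← pow_add, Nat.add_sub_cancel' ((mem_range.1 hj).le.trans hn)]
    rw [factor n h, factor m le_rfl, mul_div_mul_left _ _ (prod_ne_zero_iff.2 fun j _ => by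
      positivity), qbin]
  · rw [prod_eq_zero (mem_range.2 h) (sub_self _), zero_div, qbin_eq_zero_of_lt h]

end QBinomial

theorem Nat.card_subtype_comp_eq_pow_mul {ι α β : Type*} [Fintype ι] [Finite α] [Finite β]
    (f : α → β) {c : ℕ} (hf : ∀ b, Nat.card {a // f a = b} = c) (p : (ι → β) → Prop) :
    Nat.card {v : ι → α // p (f ∘ v)} = c ^ Fintype.card ι * Nat.card {w // p w} := by
  classical
  have : Fintype {w // p w} := Fintype.ofFinite _
  rw [← Nat.card_congr (Equiv.sigmaSubtypeFiberEquivSubtype (f ∘ ·) fun _ => Iff.rfl),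
    Nat.card_sigma, Nat.card_eq_fintype_card (α := {w // p w}), mul_comm, ← smul_eq_mul,
    ← Finset.card_univ, ← sum_const]
  refine sum_congr rfl fun w _ => ?_
  have fiber : {v : ι → α // f ∘ v = w.1} ≃ ∀ i, {a // f a = w.1 i} :=
    (Equiv.subtypeEquivRight fun v => funext_iff).trans
      (Equiv.subtypePiEquivPi (p := fun i a => f a = w.1 i))
  rw [Nat.card_congr fiber, Nat.card_pi, prod_congr rfl fun i _ => hf (w.1 i), prod_const,
    Finset.card_univ]

theorem inf_le_and_inf_eq_iff {α : Type*} [Lattice α] {a b c d : α} (hdb : d ≤ b) (hbc : b ≤ c) :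
    (a ⊓ c ≤ b ∧ a ⊓ b = d) ↔ a ⊓ c = d := by
  have hle : a ⊓ b ≤ a ⊓ c := inf_le_inf_left a hbc
  constructor
  · rintro ⟨h, rfl⟩
    exact le_antisymm (le_inf inf_le_left h) hle
  · rintro rfl
    exact ⟨hdb, le_antisymm hle (le_inf inf_le_left hdb)⟩

namespace Submodule

section Ring

variable {R M : Type*} [Ring R] [AddCommGroup M] [Module R M]

theorem card_preimage_mkQ (C : Submodule R M) (z : M ⧸ C) :
    Nat.card {y // C.mkQ y = z} = Nat.card C := by
  obtain ⟨y₀, rfl⟩ := C.mkQ_surjective z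
  refine Nat.card_congr
    { toFun := fun y => ⟨y - y₀, (Quotient.eq C).1 y.2⟩
      invFun := fun c => ⟨c + y₀, (Quotient.eq C).2 (by simp)⟩
      left_inv := fun y => Subtype.ext (by simp)
      right_inv := fun c => by simp }

theorem linearIndependent_mkQ_comp_iff {ι : Type*} (C : Submodule R M) {v : ι → M} :
    LinearIndependent R (C.mkQ ∘ v) ↔
      LinearIndependent R v ∧ Disjoint (span R (Set.range v)) C := by
  refine ⟨fun h => ⟨h.of_comp, ?_⟩, fun h => h.1.map (by rw [C.ker_mkQ]; exact h.2)⟩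
  simpa using range_ker_disjoint h

theorem inter_setOf_sub_mem_eq_empty_iff (V W : Submodule R M) (x : M) :
    (V : Set M) ∩ {y | y - x ∈ W} = ∅ ↔ x ∉ V ⊔ W := by
  rw [← Set.not_nonempty_iff_eq_empty, not_iff_not, mem_sup]
  constructor
  · rintro ⟨v, hv, hvx⟩
    exact ⟨v, hv, x - v, by simpa using W.neg_mem hvx, add_sub_cancel v x⟩
  · rintro ⟨v, hv, w, hw, rfl⟩
    exact ⟨v, hv, by simpa using W.neg_mem hw⟩

theorem comap_mkQ_inf_eq_iff {P X : Submodule R M} (hPX : P ≤ X) (A : Submodule R (M ⧸ P)) :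
    A.comap P.mkQ ⊓ X = P ↔ Disjoint A (X.map P.mkQ) := by
  rw [disjoint_iff, ← (comap_injective_of_surjective P.mkQ_surjective).eq_iff, comap_inf,
    comap_map_mkQ, sup_eq_right.2 hPX, comap_bot, ker_mkQ]

end Ring

theorem notMem_sup_iff_inf_sup_span_le {K V : Type*} [DivisionRing K] [AddCommGroup V]
    [Module K V] {W : Submodule K V} {x : V} (hx : x ∉ W) (U : Submodule K V) :
    x ∉ U ⊔ W ↔ U ⊓ (W ⊔ K ∙ x) ≤ W := by
  constructor
  · intro h v hv
    obtain ⟨hvU, hvX⟩ := mem_inf.1 hv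
    obtain ⟨w, hw, y, hy, rfl⟩ := mem_sup.1 hvX
    obtain ⟨c, rfl⟩ := mem_span_singleton.1 hy
    rcases eq_or_ne c 0 with rfl | hc
    · simpa using hw
    refine absurd ?_ h
    have hx_eq : x = c⁻¹ • (w + c • x) - c⁻¹ • w := by
      rw [smul_add, smul_smul, inv_mul_cancel₀ hc, one_smul, add_sub_cancel_left]
    rw [hx_eq]
    exact sub_mem (smul_mem _ _ (mem_sup_left hvU)) (smul_mem _ _ (mem_sup_right hw))
  · intro h hxUW
    obtain ⟨u, hu, w, hw, rfl⟩ := mem_sup.1 hxUW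
    have huX : u ∈ W ⊔ K ∙ (u + w) := by
      simpa using sub_mem (mem_sup_right (mem_span_singleton_self (u + w)))
        (mem_sup_left hw : w ∈ W ⊔ K ∙ (u + w))
    exact hx (add_mem (h (mem_inf.2 ⟨hu, huX⟩)) hw)

section FiniteDimensional

variable {K V : Type*} [DivisionRing K] [AddCommGroup V] [Module K V] [FiniteDimensional K V]

open Module

theorem finrank_comap_mkQ (P : Submodule K V) (A : Submodule K (V ⧸ P)) :
    finrank K (A.comap P.mkQ) = finrank K A + finrank K P := by
  have hP : P ≤ A.comap P.mkQ := P.ker_mkQ.ge.trans (LinearMap.ker_le_comap P.mkQ)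
  have := LinearMap.finrank_range_add_finrank_ker (P.mkQ.domRestrict (A.comap P.mkQ))
  rwa [LinearMap.range_domRestrict, map_comap_eq_of_surjective P.mkQ_surjective,
    LinearMap.ker_domRestrict, ker_mkQ, (comapSubtypeEquivOfLe hP).finrank_eq, eq_comm] at this

theorem card_finrank_eq_inf_eq {P X : Submodule K V} (hPX : P ≤ X) (s : ℕ) :
    Nat.card {U : Submodule K V // finrank K U = s ∧ U ⊓ X = P} =
      Nat.card {A : Submodule K (V ⧸ P) //
        finrank K A + finrank K P = s ∧ Disjoint A (X.map P.mkQ)} := by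
  refine (Nat.card_eq_of_bijective (fun A => ⟨A.1.comap P.mkQ,
    (finrank_comap_mkQ P A.1).trans A.2.1, (comap_mkQ_inf_eq_iff hPX A.1).2 A.2.2⟩)
    ⟨fun A B h => Subtype.ext (comap_injective_of_surjective P.mkQ_surjective
      (congrArg Subtype.val h)), fun U => ?_⟩).symm
  have hU : (U.1.map P.mkQ).comap P.mkQ = U.1 := by
    rw [comap_map_mkQ, sup_eq_right.2 (U.2.2.ge.trans inf_le_left)]
  refine ⟨⟨U.1.map P.mkQ, ?_, ?_⟩, Subtype.ext hU⟩
  · rw [← finrank_comap_mkQ, hU, U.2.1]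
  · rw [← comap_mkQ_inf_eq_iff hPX, hU, U.2.2]

end FiniteDimensional

end Submodule

section FiniteField

variable {F M : Type*} [Field F] [Fintype F] [AddCommGroup M] [Module F M] [Finite M]

local notation "q" => Fintype.card F

open Module Submodule

theorem natCast_card_linearIndependent (k : ℕ) :
    (Nat.card {v : Fin k → M // LinearIndependent F v} : ℚ) =
      ∏ i ∈ range k, ((q : ℚ) ^ finrank F M - (q : ℚ) ^ i) := by
  by_cases hk : k ≤ finrank F M
  · rw [card_linearIndependent hk, Nat.cast_prod, Fin.prod_univ_eq_prod_range
      (fun i => ((q ^ finrank F M - q ^ i : ℕ) : ℚ))]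
    refine prod_congr rfl fun i hi => ?_
    rw [Nat.cast_sub (Nat.pow_le_pow_right Fintype.card_pos ((mem_range.1 hi).le.trans hk))]
    push_cast; rfl
  · have : IsEmpty {v : Fin k → M // LinearIndependent F v} :=
      ⟨fun v => hk (by simpa using v.2.fintype_card_le_finrank)⟩
    rw [Nat.card_of_isEmpty, Nat.cast_zero,
      prod_eq_zero (mem_range.2 (not_le.1 hk)) (sub_self _)]

theorem card_linearIndependent_mkQ_comp (C : Submodule F M) (m : ℕ) :
    Nat.card {v : Fin m → M // LinearIndependent F (C.mkQ ∘ v)} =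
      q ^ (finrank F C * m) * Nat.card {w : Fin m → M ⧸ C // LinearIndependent F w} := by
  have : Finite (M ⧸ C) := Module.finite_of_finite F
  rw [Nat.card_subtype_comp_eq_pow_mul C.mkQ (card_preimage_mkQ C)
    (fun w : Fin m → M ⧸ C => LinearIndependent F w), Fintype.card_fin,
    natCard_eq_pow_finrank (K := F), Nat.card_eq_fintype_card (α := F), pow_mul]

theorem natCast_card_span_range_eq (U : Submodule F M) {m : ℕ} (hU : finrank F U = m) :
    (Nat.card {v : Fin m → M // span F (Set.range v) = U} : ℚ) =
      ∏ i ∈ range m, ((q : ℚ) ^ m - (q : ℚ) ^ i) := by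
  have tuples : {v : Fin m → M // span F (Set.range v) = U} ≃
      {w : Fin m → U // LinearIndependent F w} :=
    { toFun := fun v => ⟨fun i => ⟨v.1 i, v.2.le (subset_span (Set.mem_range_self i))⟩,
        LinearIndependent.of_comp U.subtype (show LinearIndependent F v.1 from
          linearIndependent_iff_card_eq_finrank_span.2
            (by rw [Fintype.card_fin, Set.finrank, v.2, hU]))⟩
      invFun := fun w => ⟨U.subtype ∘ w.1, by
        rw [Set.range_comp, ← map_span, w.2.span_eq_top_of_card_eq_finrank' (by simp [hU]),
          map_subtype_top]⟩
      left_inv := fun v => rfl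
      right_inv := fun w => rfl }
  rw [Nat.card_congr tuples, natCast_card_linearIndependent, hU]

theorem natCast_card_linearIndependent_mkQ_comp (C : Submodule F M) (m : ℕ) :
    (Nat.card {v : Fin m → M // LinearIndependent F (C.mkQ ∘ v)} : ℚ) =
      Nat.card {U : Submodule F M // finrank F U = m ∧ Disjoint U C} *
        ∏ i ∈ range m, ((q : ℚ) ^ m - (q : ℚ) ^ i) := by
  have span_spec : ∀ v : Fin m → M, LinearIndependent F (C.mkQ ∘ v) ↔
      finrank F (span F (Set.range v)) = m ∧ Disjoint (span F (Set.range v)) C := fun v => by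
    rw [linearIndependent_mkQ_comp_iff, linearIndependent_iff_card_eq_finrank_span,
      Fintype.card_fin, Set.finrank, eq_comm]
  have : Fintype {U : Submodule F M // finrank F U = m ∧ Disjoint U C} := Fintype.ofFinite _
  rw [← Nat.card_congr (@Equiv.sigmaSubtypeFiberEquivSubtype _ _
    (fun v => span F (Set.range v)) _ (fun U => finrank F U = m ∧ Disjoint U C) span_spec),
    Nat.card_sigma, Nat.cast_sum, sum_congr rfl fun U _ => natCast_card_span_range_eq U.1 U.2.1,
    sum_const, Finset.card_univ, nsmul_eq_mul, Nat.card_eq_fintype_card]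

theorem natCast_card_finrank_eq_disjoint (C : Submodule F M) (m : ℕ) :
    (Nat.card {U : Submodule F M // finrank F U = m ∧ Disjoint U C} : ℚ) =
      (q : ℚ) ^ (finrank F C * m) * qbin q (finrank F M - finrank F C) m := by
  have hquot : finrank F (M ⧸ C) = finrank F M - finrank F C := by
    have := C.finrank_quotient_add_finrank
    omega
  have : Finite (M ⧸ C) := Module.finite_of_finite F
  have key := natCast_card_linearIndependent_mkQ_comp C m
  rw [card_linearIndependent_mkQ_comp, Nat.cast_mul, natCast_card_linearIndependent, hquot]
    at key
  have hden : ∏ i ∈ range m, ((q : ℚ) ^ m - (q : ℚ) ^ i) ≠ 0 :=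
    prod_ne_zero_iff.2 fun i hi => sub_ne_zero.2
      (pow_lt_pow_right₀ (by exact_mod_cast Fintype.one_lt_card) (mem_range.1 hi)).ne'
  rw [← prod_pow_sub_pow_div_prod Fintype.card_ne_zero, ← mul_div_assoc, eq_div_iff hden, ← key]
  push_cast
  rfl

theorem natCast_card_finrank_eq (m : ℕ) :
    (Nat.card {U : Submodule F M // finrank F U = m} : ℚ) = qbin q (finrank F M) m := by
  simpa using natCast_card_finrank_eq_disjoint (⊥ : Submodule F M) m

theorem natCast_card_le_finrank_eq (W : Submodule F M) (m : ℕ) :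
    (Nat.card {P : Submodule F M // P ≤ W ∧ finrank F P = m} : ℚ) = qbin q (finrank F W) m := by
  rw [← natCast_card_finrank_eq, ← Nat.card_congr ((Equiv.subtypeEquiv
    (p := fun U : Submodule F W => finrank F U = m) (MapSubtype.orderIso W).toEquiv
    fun U => by rw [← finrank_map_subtype_eq W U]; rfl).trans
    (Equiv.subtypeSubtypeEquivSubtypeInter _ _))]

theorem natCast_card_finrank_eq_inf_eq {P X : Submodule F M} (hPX : P ≤ X) {s : ℕ}
    (hPs : finrank F P ≤ s) :
    (Nat.card {U : Submodule F M // finrank F U = s ∧ U ⊓ X = P} : ℚ) =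
      (q : ℚ) ^ ((finrank F X - finrank F P) * (s - finrank F P)) *
        qbin q (finrank F M - finrank F X) (s - finrank F P) := by
  have : Finite (M ⧸ P) := Module.finite_of_finite F
  have hX := finrank_comap_mkQ P (X.map P.mkQ)
  rw [comap_map_mkQ, sup_eq_right.2 hPX] at hX
  have hM := P.finrank_quotient_add_finrank
  have hXM := X.finrank_le
  have hXP : finrank F (X.map P.mkQ) = finrank F X - finrank F P := by omega
  have hMX : finrank F (M ⧸ P) - (finrank F X - finrank F P) = finrank F M - finrank F X := by
    omega
  rw [card_finrank_eq_inf_eq hPX, Nat.card_congr (Equiv.subtypeEquivRight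
    fun A : Submodule F (M ⧸ P) =>
      and_congr_left fun _ => show _ ↔ finrank F A = s - finrank F P by omega),
    natCast_card_finrank_eq_disjoint, hXP, hMX]

theorem natCast_card_finrank_eq_notMem_sup {W : Submodule F M} {x : M} (hx : x ∉ W) (s : ℕ) :
    (Nat.card {V : Submodule F M // finrank F V = s ∧ x ∉ V ⊔ W} : ℚ) =
      ∑ i ∈ range (s + 1), qbin q (finrank F W) i *
        ((q : ℚ) ^ ((finrank F W + 1 - i) * (s - i)) *
          qbin q (finrank F M - finrank F W - 1) (s - i)) := by
  classical
  have : Fintype (Submodule F M) := Fintype.ofFinite _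
  have card_eq (p : Submodule F M → Prop) [DecidablePred p] :
      Nat.card {V // p V} = #{V | p V} := by
    rw [Nat.card_eq_fintype_card, Fintype.card_subtype]
  set X := W ⊔ F ∙ x
  have hX : finrank F X = finrank F W + 1 := finrank_sup_span_singleton hx
  have fiber (P : Submodule F M) (hP : P ≤ W ∧ finrank F P ≤ s) :
      (#{V ∈ {V | finrank F V = s ∧ V ⊓ X ≤ W} | V ⊓ W = P} : ℚ) =
        (q : ℚ) ^ ((finrank F W + 1 - finrank F P) * (s - finrank F P)) *
          qbin q (finrank F M - finrank F W - 1) (s - finrank F P) := by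
    rw [filter_filter, ← card_eq, Nat.card_congr (Equiv.subtypeEquivRight fun V =>
      and_assoc.trans (and_congr_right fun _ => inf_le_and_inf_eq_iff hP.1 le_sup_left)),
      natCast_card_finrank_eq_inf_eq (hP.1.trans le_sup_left) hP.2, hX, Nat.sub_sub]
  simp_rw [card_eq, notMem_sup_iff_inf_sup_span_le hx]
  rw [card_eq_sum_card_fiberwise (f := (· ⊓ W)) (t := {P | P ≤ W ∧ finrank F P ≤ s})
    fun V hV => by
      rw [mem_coe, mem_filter] at hV
      rw [mem_coe, mem_filter]
      exact ⟨mem_univ _, inf_le_right, hV.2.1 ▸ Submodule.finrank_mono inf_le_left⟩,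
    Nat.cast_sum, sum_congr rfl fun P hP => fiber P (mem_filter.1 hP).2,
    ← sum_fiberwise_of_maps_to (g := fun P : Submodule F M => finrank F P) (t := range (s + 1))
      fun P hP => mem_range.2 (Nat.lt_succ_of_le (mem_filter.1 hP).2.2)]
  refine sum_congr rfl fun i hi => ?_
  rw [sum_congr rfl fun P hP => by rw [(mem_filter.1 hP).2], sum_const, nsmul_eq_mul,
    filter_filter, ← natCast_card_le_finrank_eq W i, card_eq]
  congr 3
  ext P
  have := mem_range.1 hi
  simp only [mem_filter, mem_univ, true_and, and_assoc]
  exact and_congr_right fun _ => ⟨And.right, fun h => ⟨by omega, h⟩⟩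

end FiniteField

/-- Let `H = x + W` be a `(k-s)`-dimensional affine subspace of `𝔽_q^k` not passing
through the origin. The number `n_q(k,s)` of `s`-dimensional vector subspaces of `𝔽_q^k`
disjoint from `H` equals `∑_{i=1}^{s} q^((s-i)(k-i-s+1)) [s-1 choose i-1]_q [k-s choose i]_q`. -/
theorem count_subspaces_disjoint (q k s : ℕ) (hs : 1 ≤ s) (hsk : s ≤ k)
    (F : Type) [Field F] [Fintype F] (hF : Fintype.card F = q)
    (W : Submodule F (Fin k → F)) (hW : Module.finrank F W = k - s)
    (x : Fin k → F) (hx : x ∉ W) :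
    (Nat.card {V : Submodule F (Fin k → F) //
        Module.finrank F V = s ∧ (V : Set (Fin k → F)) ∩ {y | y - x ∈ W} = ∅} : ℚ)
      = ∑ i ∈ Finset.Icc 1 s,
          (q : ℚ) ^ ((s - i) * (k - i - s + 1)) * qbin q (s - 1) (i - 1) * qbin q (k - s) i := by
  subst hF
  rw [Nat.card_congr (Equiv.subtypeEquivRight fun V =>
      and_congr_right fun _ => Submodule.inter_setOf_sub_mem_eq_empty_iff V W x),
    natCast_card_finrank_eq_notMem_sup hx, Module.finrank_fin_fun, hW,
    show k - (k - s) - 1 = s - 1 by omega]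
  have hq : Fintype.card F ≠ 1 := Fintype.one_lt_card.ne'
  rw [← sum_subset (s₁ := Icc 1 s) (fun i hi => by simp at hi ⊢; omega) fun i hi hi' => by
    rw [show i = 0 by simp at hi hi'; omega, qbin_eq_zero_of_lt (show s - 1 < s - 0 by omega),
      mul_zero, mul_zero]]
  refine sum_congr rfl fun i hi => ?_
  rw [mem_Icc] at hi
  rw [qbin_symm hq (show s - i ≤ s - 1 by omega), show s - 1 - (s - i) = i - 1 by omega]
  rcases le_or_gt i (k - s) with h | h
  · rw [show (k - s + 1 - i) * (s - i) = (s - i) * (k - i - s + 1) by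
      rw [mul_comm]; congr 1; omega]
    ring
  · simp [qbin_eq_zero_of_lt h]
end

section
/- Let $\mathcal{L}$ be a set of points of $\mathrm{PG}(k-1,q)$, viewed as a set of 1-dimensional vector subspaces (lines through the origin) of $\mathbb{F}_q^k$. Then $\mathcal{L}$ is a strong $(s-1)$-blocking set if and only if $B = \bigcup_{\ell \in \mathcal{L}} \ell \subseteq \mathbb{F}_q^k$ intersects every affine subspace of codimension $s$ in $\mathbb{F}_q^k$. -/
open Module Submodule

variable {K V : Type*} [Field K] [AddCommGroup V] [Module K V] [FiniteDimensional K V]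

private lemma finrank_sup_span_singleton' {U : Submodule K V} {x : V} (hx : x ∉ U) :
    finrank K ↥(U ⊔ K ∙ x) = finrank K U + 1 := by
  have hx0 : x ≠ 0 := fun h => hx (h ▸ U.zero_mem)
  have hinf : U ⊓ (K ∙ x) = ⊥ := by
    rw [eq_bot_iff]
    rintro v ⟨hvU, hvx⟩
    obtain ⟨c, rfl⟩ := Submodule.mem_span_singleton.mp hvx
    rcases eq_or_ne c 0 with rfl | hc
    · simp
    · exact absurd (by simpa [smul_smul, inv_mul_cancel₀ hc] using U.smul_mem c⁻¹ hvU) hx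
  have h := Submodule.finrank_sup_add_finrank_inf_eq U (K ∙ x)
  rw [hinf, finrank_bot, finrank_span_singleton hx0, add_zero] at h
  exact h

private lemma exists_mid' : ∀ (d : ℕ) (U W : Submodule K V), U ≤ W →
    finrank K U + d ≤ finrank K W →
    ∃ Z : Submodule K V, U ≤ Z ∧ Z ≤ W ∧ finrank K Z = finrank K U + d := by
  intro d
  induction d with
  | zero => exact fun U W hUW _ => ⟨U, le_refl U, hUW, by simp⟩
  | succ d ih =>
    intro U W hUW hd
    have hlt : U < W := by
      refine lt_of_le_of_ne hUW ?_
      rintro rfl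
      omega
    obtain ⟨x, hxW, hxU⟩ := SetLike.exists_of_lt hlt
    have hUx : U ⊔ (K ∙ x) ≤ W := sup_le hUW ((Submodule.span_singleton_le_iff_mem x W).mpr hxW)
    have hfr := finrank_sup_span_singleton' (K := K) hxU
    obtain ⟨Z, h1, h2, h3⟩ := ih (U ⊔ (K ∙ x)) W hUx (by omega)
    exact ⟨Z, le_trans le_sup_left h1, h2, by omega⟩

/-- Equivalence between strong `(s-1)`-blocking sets of `PG(k-1,q)` (sets of lines through
the origin of `𝔽_q^k` whose intersection with every codimension-`(s-1)` vector subspace `W`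
spans `W`) and affine `s`-blocking sets of the form `B = ⋃_{ℓ ∈ L} ℓ` (sets meeting every
coset of every `(k-s)`-dimensional vector subspace). -/
theorem strong_blocking_iff_affine_blocking (q k s : ℕ) (hs : 1 ≤ s) (hsk : s ≤ k)
    (F : Type) [Field F] [Fintype F] (hF : Fintype.card F = q)
    (L : Set (Submodule F (Fin k → F))) (hL : ∀ ℓ ∈ L, Module.finrank F ℓ = 1) :
    (∀ W : Submodule F (Fin k → F), Module.finrank F W = k - (s - 1) →
        (⨆ ℓ ∈ {m ∈ L | m ≤ W}, ℓ) = W)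
    ↔ (∀ W : Submodule F (Fin k → F), Module.finrank F W = k - s →
        ∀ x : Fin k → F, ∃ b ∈ ⋃ ℓ ∈ L, (ℓ : Set (Fin k → F)), b - x ∈ W) := by
  have htop : finrank F (Fin k → F) = k := by simp
  constructor
  · intro hstrong W hW x
    by_cases hx : x ∈ W
    · obtain ⟨W', _, _, hW'⟩ := exists_mid' 1 W ⊤ le_top
        (by rw [finrank_top, htop, hW]; omega)
      have hsup := hstrong W' (by omega)
      have hne : ∃ ℓ ∈ L, ℓ ≤ W' := by
        by_contra h
        push_neg at h
        have hbot : (⨆ ℓ ∈ {m ∈ L | m ≤ W'}, ℓ) ≤ ⊥ :=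
          iSup_le fun ℓ => iSup_le fun hℓ => False.elim (h ℓ hℓ.1 hℓ.2)
        rw [hsup] at hbot
        have h0 : finrank F W' = 0 := by
          rw [le_bot_iff.mp hbot]; exact finrank_bot F _
        omega
      obtain ⟨ℓ, hℓL, _⟩ := hne
      refine ⟨0, Set.mem_biUnion hℓL ℓ.zero_mem, by simpa using W.neg_mem hx⟩
    · set W' := W ⊔ (F ∙ x) with hW'def
      have hrk : finrank F W' = finrank F W + 1 := finrank_sup_span_singleton' hx
      have hsup := hstrong W' (by omega)
      have hxW' : x ∈ W' := le_sup_right (a := W) (Submodule.mem_span_singleton_self x)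
      have hnle : ¬ (⨆ ℓ ∈ {m ∈ L | m ≤ W'}, ℓ) ≤ W := by
        rw [hsup]; intro h; exact hx (h hxW')
      have hex : ∃ ℓ ∈ L, ℓ ≤ W' ∧ ¬ ℓ ≤ W := by
        by_contra h
        push_neg at h
        exact hnle (iSup_le fun ℓ => iSup_le fun hℓ => h ℓ hℓ.1 hℓ.2)
      obtain ⟨ℓ, hℓL, hℓW', hℓW⟩ := hex
      obtain ⟨v, hvℓ, hvW⟩ := Set.not_subset.mp fun h => hℓW fun y hy => h hy
      have hvW' : v ∈ W' := hℓW' hvℓ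
      obtain ⟨w, hw, c, hc⟩ : ∃ w ∈ W, ∃ c : F, v = c • x + w := by
        rw [hW'def, Submodule.mem_sup] at hvW'
        obtain ⟨w, hw, z, hz, hwz⟩ := hvW'
        obtain ⟨c, hc⟩ := Submodule.mem_span_singleton.mp hz
        exact ⟨w, hw, c, by rw [hc, ← hwz]; abel⟩
      have hc0 : c ≠ 0 := by
        rintro rfl
        rw [zero_smul, zero_add] at hc
        exact hvW (hc ▸ hw)
      refine ⟨c⁻¹ • v, Set.mem_biUnion hℓL (ℓ.smul_mem c⁻¹ hvℓ), ?_⟩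
      have heq : c⁻¹ • v - x = c⁻¹ • w := by
        rw [hc, smul_add, smul_smul, inv_mul_cancel₀ hc0, one_smul]
        abel
      rw [heq]
      exact W.smul_mem _ hw
  · intro haff W hW
    set U := (⨆ ℓ ∈ {m ∈ L | m ≤ W}, ℓ) with hU
    have hUW : U ≤ W := iSup_le fun ℓ => iSup_le fun hℓ => hℓ.2
    refine le_antisymm hUW ?_
    by_contra hlt'
    have hlt : U < W := lt_of_le_of_ne hUW fun h => hlt' h.ge
    have hfr : finrank F U < finrank F W := Submodule.finrank_lt_finrank_of_lt hlt
    obtain ⟨H, hUH, hHW, hHrk⟩ := exists_mid' (k - s - finrank F U) U W hUW (by omega)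
    have hHrk' : finrank F H = k - s := by omega
    have hHlt : H < W := by
      refine lt_of_le_of_ne hHW ?_
      rintro rfl
      omega
    obtain ⟨x, hxW, hxH⟩ := SetLike.exists_of_lt hHlt
    obtain ⟨b, hb, hbx⟩ := haff H hHrk' x
    simp only [Set.mem_iUnion] at hb
    obtain ⟨ℓ, hℓL, hbℓ⟩ := hb
    have hbW : b ∈ W := by
      have h1 : b - x ∈ W := hHW hbx
      simpa using W.add_mem h1 hxW
    have hb0 : b ≠ 0 := by
      rintro rfl
      apply hxH
      simpa using H.neg_mem hbx
    have hspan : (F ∙ b) = ℓ :=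
      eq_of_le_of_finrank_le ((Submodule.span_singleton_le_iff_mem b ℓ).mpr hbℓ)
        (by rw [hL ℓ hℓL, finrank_span_singleton hb0])
    have hℓW : ℓ ≤ W := hspan ▸ (Submodule.span_singleton_le_iff_mem b W).mpr hbW
    have hℓU : ℓ ≤ U := le_iSup₂_of_le ℓ ⟨hℓL, hℓW⟩ le_rfl
    have hbH : b ∈ H := hUH (hℓU hbℓ)
    apply hxH
    have h2 : x - b ∈ H := by simpa using H.neg_mem hbx
    simpa using H.add_mem hbH h2
end

section
/- For $q = 2$ and integers $2 \le s \le k$, there exists an affine $s$-blocking set in $\mathbb{F}_2^k$ of size at most $\frac{s(k-s)+s+2}{\log_2(2^s/(2^s-1))} + 1$. -/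
/-!
Choose `m` points of `𝔽₂ᵏ` independently and uniformly at random. A fixed coset of a fixed
`(k-s)`-dimensional subspace is missed by all of them with probability `(1 - 2⁻ˢ)ᵐ`, and there are
fewer than `2 ^ ((k-s)s + 2)` such subspaces (because `∏_{j ≥ 1} (1 - 2⁻ʲ) > 1/4`), each with
`2 ^ s` cosets. Once `m ≥ (s(k-s) + s + 2) / log₂ (2ˢ / (2ˢ - 1))` the union bound leaves a
positive probability that every coset is hit, and the points then form the blocking set.
-/

open Module Finset

section Covering

variable {R V : Type*} [Ring R] [AddCommGroup V] [Module R V]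

theorem Submodule.natCard_fiber_mkQ (W : Submodule R V) (c : V ⧸ W) :
    Nat.card {v // W.mkQ v = c} = Nat.card W := by
  have e := AddMonoidHom.fiberEquivKerOfSurjective (f := W.mkQ.toAddMonoidHom) W.mkQ_surjective c
  have hker : W.mkQ.toAddMonoidHom.ker = W.toAddSubgroup := by
    ext v
    simp
  rw [hker] at e
  exact Nat.card_congr e

theorem natCard_pi_forall_not {ι α : Type*} [Fintype ι] [Finite α] (p : α → Prop) :
    Nat.card {f : ι → α // ∀ i, ¬ p (f i)} =
      (Nat.card α - Nat.card {a // p a}) ^ Fintype.card ι := by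
  classical
  have : Fintype α := Fintype.ofFinite α
  rw [Nat.card_congr (Equiv.subtypePiEquivPi (p := fun _ a => ¬ p a)), Nat.card_pi]
  simp [Nat.card_eq_fintype_card, Fintype.card_subtype_compl]

/-- Union bound: the tuples `f` missing the coset `c` of `W i` number `(|V| - |W i|) ^ m`. -/
theorem exists_surjective_mkQ_comp [Finite V] {ι : Type*} [Finite ι] (W : ι → Submodule R V)
    {a b m : ℕ} (ha : ∀ i, Nat.card (V ⧸ W i) = a) (hb : ∀ i, Nat.card (W i) = b)
    (h : Nat.card ι * a * (Nat.card V - b) ^ m < Nat.card V ^ m) :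
    ∃ f : Fin m → V, ∀ i, Function.Surjective ((W i).mkQ ∘ f) := by
  have : Fintype ι := Fintype.ofFinite ι
  have : ∀ i, Fintype (V ⧸ W i) := fun i =>
    @Fintype.ofFinite _ (Finite.of_surjective _ (W i).mkQ_surjective)
  by_contra! hmiss
  simp only [Function.Surjective, Function.comp_apply, not_forall, not_exists] at hmiss
  have hcover : Function.Surjective fun q : Σ p : Σ i, V ⧸ W i,
      {f : Fin m → V // ∀ j, ¬ (W p.1).mkQ (f j) = p.2} => (q.2 : Fin m → V) := by
    intro f
    obtain ⟨i, c, hc⟩ := hmiss f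
    exact ⟨⟨⟨i, c⟩, f, hc⟩, rfl⟩
  have hcard : ∀ p : Σ i, V ⧸ W i,
      Nat.card {f : Fin m → V // ∀ j, ¬ (W p.1).mkQ (f j) = p.2} = (Nat.card V - b) ^ m :=
    fun p => by
      rw [natCard_pi_forall_not (fun v => (W p.1).mkQ v = p.2), Submodule.natCard_fiber_mkQ, hb,
        Fintype.card_fin]
  have hle := Nat.card_le_card_of_surjective _ hcover
  rw [Nat.card_sigma, Finset.sum_congr rfl fun p _ => hcard p, Finset.sum_const, Finset.card_univ,
    Fintype.card_sigma] at hle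
  simp only [← Nat.card_eq_fintype_card, ha, Finset.sum_const, Finset.card_univ, smul_eq_mul,
    Nat.card_fun, Nat.card_fin] at hle
  exact hle.not_gt h

end Covering

section Subspaces

variable {K V : Type*} [DivisionRing K] [AddCommGroup V] [Module K V]

theorem Submodule.natCard_quotient_of_finrank_eq [Module.Finite K V] {W : Submodule K V}
    {d s : ℕ} (hV : finrank K V = d + s) (hW : finrank K W = d) :
    Nat.card (V ⧸ W) = Nat.card K ^ s := by
  have := W.finrank_quotient_add_finrank
  rw [Module.natCard_eq_pow_finrank (K := K), show finrank K (V ⧸ W) = s by omega]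

theorem Submodule.span_range_subtype_comp_eq {W : Submodule K V} [FiniteDimensional K W] {d : ℕ}
    (hW : finrank K W = d) {s : Fin d → W} (hs : LinearIndependent K s) :
    span K (Set.range (W.subtype ∘ s)) = W := by
  have htop : span K (Set.range s) = ⊤ :=
    eq_top_of_finrank_eq (by rw [finrank_span_eq_card hs, Fintype.card_fin, hW])
  rw [Set.range_comp, ← Submodule.map_span, htop, Submodule.map_top, Submodule.range_subtype]

/-- A `d`-dimensional subspace together with an ordered basis of it is a linearly independent
`d`-tuple of `V`, and it is recovered from the tuple as its span. -/
theorem natCard_finrank_eq_mul_prod_le [Fintype K] [Finite V] (d : ℕ) :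
    Nat.card {W : Submodule K V // finrank K W = d} *
        ∏ i : Fin d, (Fintype.card K ^ d - Fintype.card K ^ (i : ℕ)) ≤ Nat.card V ^ d := by
  have : Fintype {W : Submodule K V // finrank K W = d} := Fintype.ofFinite _
  have hinj : Function.Injective fun p : (Σ W : {W : Submodule K V // finrank K W = d},
      {s : Fin d → W.1 // LinearIndependent K s}) => p.1.1.subtype ∘ p.2.1 := by
    rintro ⟨⟨W, hW⟩, s, hs⟩ ⟨⟨W', hW'⟩, s', hs'⟩ h
    obtain rfl : W = W' := by
      rw [← Submodule.span_range_subtype_comp_eq hW hs,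
        ← Submodule.span_range_subtype_comp_eq hW' hs']
      exact congrArg _ (congrArg _ h)
    obtain rfl : s = s' := funext fun i => Subtype.ext (congrFun h i)
    rfl
  have hle := Nat.card_le_card_of_injective _ hinj
  rwa [Nat.card_sigma, Finset.sum_congr rfl fun W _ => by rw [card_linearIndependent W.2.ge, W.2],
    Finset.sum_const, Finset.card_univ, smul_eq_mul, Nat.card_fun, Nat.card_fin,
    ← Nat.card_eq_fintype_card] at hle

end Subspaces

section Estimates

theorem quarter_add_half_pow_le_prod_one_sub_half_pow (n : ℕ) :
    1 / 4 + (1 / 2 : ℝ) ^ (n + 1) ≤ ∏ j ∈ range n, (1 - (1 / 2 : ℝ) ^ (j + 1)) := by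
  induction n with
  | zero => norm_num
  | succ n ih =>
    rcases n.eq_zero_or_pos with rfl | hn
    · norm_num
    set x := (1 / 2 : ℝ) ^ (n + 1)
    have hx : x ≤ 1 / 4 := by
      calc x ≤ (1 / 2) ^ 2 := pow_le_pow_of_le_one (by norm_num) (by norm_num) (by omega)
        _ = 1 / 4 := by norm_num
    have hx0 : 0 < x := by positivity
    rw [prod_range_succ, pow_succ]
    calc 1 / 4 + x * (1 / 2) ≤ (1 / 4 + x) * (1 - x) := by nlinarith
      _ ≤ _ := mul_le_mul_of_nonneg_right ih (by linarith)

theorem two_pow_mul_self_div_four_lt_prod (d : ℕ) :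
    (2 : ℝ) ^ (d * d) / 4 < ((∏ i : Fin d, (2 ^ d - 2 ^ (i : ℕ)) : ℕ) : ℝ) := by
  have hfactor : ∀ i ∈ range d,
      ((2 ^ d - 2 ^ i : ℕ) : ℝ) = 2 ^ d * (1 - (1 / 2) ^ (d - 1 - i + 1)) := by
    intro i hi
    have hid : i < d := mem_range.1 hi
    rw [Nat.cast_sub (Nat.pow_le_pow_right two_pos hid.le), show d - 1 - i + 1 = d - i by omega,
      one_div_pow, one_div, mul_one_sub, ← pow_sub₀ (2 : ℝ) two_ne_zero (Nat.sub_le d i),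
      Nat.sub_sub_self hid.le]
    push_cast
    rfl
  rw [Fin.prod_univ_eq_prod_range (fun i => 2 ^ d - 2 ^ i), Nat.cast_prod, prod_congr rfl hfactor,
    prod_mul_distrib, prod_const, card_range, ← pow_mul,
    prod_range_reflect (fun j => 1 - (1 / 2 : ℝ) ^ (j + 1))]
  calc (2 : ℝ) ^ (d * d) / 4 < 2 ^ (d * d) * (1 / 4 + (1 / 2) ^ (d + 1)) := by
        rw [mul_add, div_eq_mul_one_div]
        have : (0 : ℝ) < 2 ^ (d * d) * (1 / 2) ^ (d + 1) := by positivity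
        linarith
    _ ≤ _ := mul_le_mul_of_nonneg_left (quarter_add_half_pow_le_prod_one_sub_half_pow d)
        (by positivity)

theorem natCard_finrank_eq_lt_of_zmod_two {V : Type*} [AddCommGroup V] [Module (ZMod 2) V]
    [Finite V] {d e : ℕ} (hV : finrank (ZMod 2) V = d + e) :
    (Nat.card {W : Submodule (ZMod 2) V // finrank (ZMod 2) W = d} : ℝ) < 2 ^ (d * e + 2) := by
  have hP := two_pow_mul_self_div_four_lt_prod d
  have hcount := natCard_finrank_eq_mul_prod_le (K := ZMod 2) (V := V) d
  rw [ZMod.card, Module.natCard_eq_pow_finrank (K := ZMod 2) (V := V), hV, Nat.card_zmod]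
    at hcount
  have hPpos : (0 : ℝ) < 2 ^ (d * d) / 4 := by positivity
  calc _ ≤ (2 : ℝ) ^ ((d + e) * d) / ((∏ i : Fin d, (2 ^ d - 2 ^ (i : ℕ)) : ℕ) : ℝ) := by
        rw [le_div_iff₀ (hPpos.trans hP), pow_mul]
        exact_mod_cast hcount
    _ < 2 ^ ((d + e) * d) / (2 ^ (d * d) / 4) := div_lt_div_of_pos_left (by positivity) hPpos hP
    _ = 2 ^ (d * e + 2) := by
        rw [div_div_eq_mul_div, div_eq_iff (by positivity), ← pow_add]
        ring

theorem two_pow_le_pow_of_le_mul_logb {r : ℝ} (hr : 0 < r) {n m : ℕ}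
    (h : (n : ℝ) ≤ m * Real.logb 2 r) : (2 : ℝ) ^ n ≤ r ^ m := by
  rw [← Real.rpow_natCast]
  exact (Real.le_logb_iff_rpow_le one_lt_two (pow_pos hr m)).1 (by rwa [Real.logb_pow])

theorem mul_two_pow_mul_pow_sub_lt_of_le_mul_logb {C d s m : ℕ} (hs : 1 ≤ s)
    (hC : (C : ℝ) < 2 ^ (d * s + 2))
    (hm : ((d * s + s + 2 : ℕ) : ℝ) ≤ m * Real.logb 2 (2 ^ s / (2 ^ s - 1))) :
    C * 2 ^ s * (2 ^ (d + s) - 2 ^ d) ^ m < (2 ^ (d + s)) ^ m := by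
  have hs1 : (0 : ℝ) < 2 ^ s - 1 := by
    have : (2 : ℝ) ≤ 2 ^ s := le_self_pow₀ one_le_two (by omega)
    linarith
  set r : ℝ := 2 ^ s / (2 ^ s - 1)
  have hr : 0 < r := by positivity
  have hsub : ((2 ^ (d + s) - 2 ^ d : ℕ) : ℝ) = 2 ^ (d + s) * r⁻¹ := by
    rw [Nat.cast_sub (Nat.pow_le_pow_right two_pos (Nat.le_add_right d s)), inv_div]
    field_simp
    push_cast
    ring
  rw [← Nat.cast_lt (α := ℝ)]
  push_cast [hsub]
  calc (C : ℝ) * 2 ^ s * (2 ^ (d + s) * r⁻¹) ^ m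
      < 2 ^ (d * s + 2) * 2 ^ s * (2 ^ (d + s) * r⁻¹) ^ m := by gcongr
    _ = 2 ^ (d * s + s + 2) * (r⁻¹) ^ m * (2 ^ (d + s)) ^ m := by ring
    _ ≤ r ^ m * (r⁻¹) ^ m * (2 ^ (d + s)) ^ m := by
        gcongr
        exact_mod_cast two_pow_le_pow_of_le_mul_logb hr hm
    _ = (2 ^ (d + s)) ^ m := by rw [← mul_pow, mul_inv_cancel₀ hr.ne', one_pow, one_mul]

end Estimates

/-- For `2 ≤ s ≤ k`, there exists an affine `s`-blocking set in `𝔽_2^k` (a set of points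
meeting every `(k-s)`-dimensional affine subspace) of size at most
`(s(k-s)+s+2)/log₂(2^s/(2^s-1)) + 1`. -/
theorem affine_blocking_upper_q2 (k s : ℕ) (hs : 2 ≤ s) (hsk : s ≤ k) :
    ∃ B : Finset (Fin k → ZMod 2),
      (∀ W : Submodule (ZMod 2) (Fin k → ZMod 2), Module.finrank (ZMod 2) W = k - s →
        ∀ x : Fin k → ZMod 2, ∃ b ∈ B, b - x ∈ W) ∧
      (B.card : ℝ) ≤ (s * (k - s) + s + 2) /
          Real.logb 2 ((2 : ℝ) ^ s / ((2 : ℝ) ^ s - 1)) + 1 := by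
  obtain ⟨d, rfl⟩ : ∃ d, k = d + s := ⟨k - s, by omega⟩
  rw [Nat.add_sub_cancel]
  set V := Fin (d + s) → ZMod 2
  have hV : finrank (ZMod 2) V = d + s := finrank_fin_fun _
  set ℓ := Real.logb 2 ((2 : ℝ) ^ s / ((2 : ℝ) ^ s - 1))
  have hℓ : 0 < ℓ := by
    refine Real.logb_pos one_lt_two ((one_lt_div ?_).2 (by linarith))
    linarith [le_self_pow₀ (one_le_two : (1 : ℝ) ≤ 2) (by omega : s ≠ 0)]
  set m := ⌈((d * s + s + 2 : ℕ) : ℝ) / ℓ⌉₊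
  have hm : ((d * s + s + 2 : ℕ) : ℝ) ≤ m * ℓ := (div_le_iff₀ hℓ).1 (Nat.le_ceil _)
  obtain ⟨f, hf⟩ := exists_surjective_mkQ_comp
    (fun W : {W : Submodule (ZMod 2) V // finrank (ZMod 2) W = d} => W.1)
    (fun W => Submodule.natCard_quotient_of_finrank_eq hV W.2)
    (fun W => by rw [Module.natCard_eq_pow_finrank (K := ZMod 2), W.2])
    (by
      rw [Module.natCard_eq_pow_finrank (K := ZMod 2) (V := V), hV, Nat.card_zmod]
      exact mul_two_pow_mul_pow_sub_lt_of_le_mul_logb (by omega)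
        (natCard_finrank_eq_lt_of_zmod_two hV) hm)
  refine ⟨univ.image f, fun W hW x => ?_, ?_⟩
  · obtain ⟨i, hi⟩ := hf ⟨W, hW⟩ (W.mkQ x)
    exact ⟨f i, mem_image_of_mem f (mem_univ i), (Submodule.Quotient.eq W).1 hi⟩
  · calc ((univ.image f).card : ℝ) ≤ m := by exact_mod_cast card_image_le.trans (by simp)
      _ ≤ ((d * s + s + 2 : ℕ) : ℝ) / ℓ + 1 := (Nat.ceil_lt_add_one (by positivity)).le
      _ = _ := by push_cast; ring
end

section
/- Let $G \in \mathbb{F}_3^{k\times n}$ be a matrix of rank $k$ with column set $B$, and let $C$ be the row space of $G$. Then $C$ is a linear trifferent code if and only if $\{0\} \cup B \cup (-B)$ is an affine 2-blocking set in $\mathbb{F}_3^k$. -/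
/-!
Every codeword of `C` has the form `(f b)_{b ∈ B}` for a linear functional `f` on `𝔽₃^k`, and
three elements of `𝔽₃` are pairwise distinct iff they form a progression with nonzero step. Hence
`C` is trifferent iff any two functionals `f`, `g` such that none of `f`, `g`, `f + g` vanishes on
`B` take a common nonzero value at some column.

A coset of a codimension-`2` subspace is a fibre of a linear map `φ : 𝔽₃^k → 𝔽₃²`, and
`{0} ∪ B ∪ -B` meets the fibre over `v ≠ 0` iff `φ b = ±v` for some column `b`. Composing `φ`
with an automorphism of `𝔽₃²` that sends `v` to `(1, 1)` turns this into the condition above for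
the two coordinates of `φ`; conversely such `f`, `g` always reach `(1, 1)` jointly.
-/

open Module Submodule Set Matrix

-- `finrank K V - m` truncates: when `m` exceeds the dimension, `W = 0` is the only admissible `W`.
def IsAffineBlocking (K : Type*) {V : Type*} [Field K] [AddCommGroup V] [Module K V]
    (S : Set V) (m : ℕ) : Prop :=
  ∀ W : Submodule K V, finrank K W = finrank K V - m → ∀ x, ∃ b ∈ S, b - x ∈ W

def IsTrifferent {ι : Type*} (C : Set (ι → ZMod 3)) : Prop :=
  ∀ x ∈ C, ∀ y ∈ C, ∀ z ∈ C, x ≠ y → y ≠ z → x ≠ z →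
    ∃ i, ({x i, y i, z i} : Set (ZMod 3)) = univ

section LinearAlgebra

variable {K V : Type*} [Field K] [AddCommGroup V] [Module K V]

theorem exists_linearEquiv_apply_eq {v w : V} (hv : v ≠ 0) (hw : w ≠ 0) :
    ∃ e : V ≃ₗ[K] V, e v = w := by
  obtain ⟨e, he⟩ := Submodule.exists_linearEquiv_restrict_eq
    (LinearEquiv.coord K V v hv ≪≫ₗ LinearEquiv.toSpanNonzeroSingleton K V w hw)
  exact ⟨e, by simpa [LinearEquiv.coord_self] using (he ⟨v, mem_span_singleton_self v⟩).symm⟩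

variable [FiniteDimensional K V]

theorem Submodule.exists_le_finrank_eq (U : Submodule K V) {d : ℕ} (hd : d ≤ finrank K U) :
    ∃ W ≤ U, finrank K W = d := by
  obtain ⟨ι, hι⟩ : ∃ ι : (Fin d → K) →ₗ[K] U, Function.Injective ι :=
    finrank_le_iff_exists_linearMap.mp (by rwa [finrank_fin_fun])
  refine ⟨LinearMap.range (U.subtype ∘ₗ ι), ?_, ?_⟩
  · rw [LinearMap.range_comp]
    exact map_subtype_le U _
  · rw [LinearMap.finrank_range_of_inj (f := U.subtype ∘ₗ ι) (U.injective_subtype.comp hι),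
      finrank_fin_fun]

theorem isAffineBlocking_iff_forall_linearMap (S : Set V) (m : ℕ) :
    IsAffineBlocking K S m ↔ ∀ φ : V →ₗ[K] (Fin m → K), ∀ x, ∃ b ∈ S, φ b = φ x := by
  constructor
  · intro hS φ x
    have hker : finrank K V - m ≤ finrank K (LinearMap.ker φ) := by
      have hφ := φ.finrank_range_add_finrank_ker
      have hrange := (LinearMap.range φ).finrank_le
      rw [finrank_fin_fun] at hrange
      omega
    obtain ⟨W, hWker, hW⟩ := (LinearMap.ker φ).exists_le_finrank_eq hker
    obtain ⟨b, hb, hbx⟩ := hS W hW x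
    exact ⟨b, hb, sub_eq_zero.mp (by simpa using hWker hbx)⟩
  · intro hS W hW x
    obtain ⟨ι, hι⟩ : ∃ ι : (V ⧸ W) →ₗ[K] (Fin m → K), Function.Injective ι := by
      refine finrank_le_iff_exists_linearMap.mp ?_
      have hquot := W.finrank_quotient_add_finrank
      rw [finrank_fin_fun]
      omega
    obtain ⟨b, hb, hbx⟩ := hS (ι ∘ₗ W.mkQ) x
    exact ⟨b, hb, (Submodule.Quotient.eq W).mp (hι hbx)⟩

end LinearAlgebra

theorem Matrix.span_range_col_eq_top {m ι K : Type*} [Fintype m] [Fintype ι] [Field K]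
    (G : Matrix m ι K) (hG : G.rank = Fintype.card m) : span K (range G.col) = ⊤ :=
  eq_top_of_finrank_eq (by rw [← rank_eq_finrank_span_cols, hG, finrank_fintype_fun_eq_card])

theorem Matrix.range_vecMul_eq_range_dual {m ι R : Type*} [Fintype m] [DecidableEq m]
    [CommSemiring R] (G : Matrix m ι R) :
    range (fun u => vecMul u G) = range fun (f : Dual R (m → R)) j => f fun i => G i j := by
  rw [← (dotProductEquiv R m).surjective.range_comp]
  rfl

namespace ZMod3

theorem insert_eq_univ_iff (a b c : ZMod 3) :
    ({a, b, c} : Set (ZMod 3)) = univ ↔ a - b = b - c ∧ a - b ≠ 0 := by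
  simp only [eq_univ_iff_forall, mem_insert_iff, mem_singleton_iff]
  revert a b c
  decide

theorem eq_one_or_eq_neg_one_iff (w : Fin 2 → ZMod 3) :
    w = 1 ∨ w = -1 ↔ w 0 = w 1 ∧ w 0 ≠ 0 := by
  revert w
  decide

-- The lines of `𝔽₃²` are `v₀ = 0`, `v₁ = 0`, `v₀ + v₁ = 0` and the span of `(1, 1)`: the image of
-- `x ↦ (f x, g x)` lies in none of the first three, so it contains `(1, 1)`.
theorem exists_apply_eq_one_and_apply_eq_one {M : Type*} [AddCommGroup M] [Module (ZMod 3) M]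
    {f g : M →ₗ[ZMod 3] ZMod 3} (hf : f ≠ 0) (hg : g ≠ 0) (hfg : f + g ≠ 0) :
    ∃ x, f x = 1 ∧ g x = 1 := by
  obtain ⟨x, hx⟩ := DFunLike.ne_iff.mp hf
  obtain ⟨y, hy⟩ := DFunLike.ne_iff.mp hg
  obtain ⟨z, hz⟩ := DFunLike.ne_iff.mp hfg
  have hlines : ∀ p₀ q₀ r₀ p₁ q₁ r₁ : ZMod 3, p₀ ≠ 0 → q₁ ≠ 0 → r₀ + r₁ ≠ 0 →
      ∃ a b d : ZMod 3, a * p₀ + b * q₀ + d * r₀ = 1 ∧ a * p₁ + b * q₁ + d * r₁ = 1 := by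
    decide
  obtain ⟨a, b, d, h₀, h₁⟩ := hlines (f x) (f y) (f z) (g x) (g y) (g z) hx hy hz
  exact ⟨a • x + b • y + d • z, by simpa using h₀, by simpa using h₁⟩

end ZMod3

section Trifferent

variable {ι V : Type*} [AddCommGroup V] [Module (ZMod 3) V]

theorem isTrifferent_range_dual_iff (c : ι → V) :
    IsTrifferent (range fun (f : Dual (ZMod 3) V) j => f (c j)) ↔
      ∀ f g : Dual (ZMod 3) V, (∃ j, f (c j) ≠ 0) → (∃ j, g (c j) ≠ 0) →
        (∃ j, (f + g) (c j) ≠ 0) → ∃ j, f (c j) = g (c j) ∧ f (c j) ≠ 0 := by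
  simp only [IsTrifferent, forall_mem_range, ZMod3.insert_eq_univ_iff, ne_eq, funext_iff,
    not_forall]
  constructor
  · intro hT f g hf hg hfg
    obtain ⟨j, hj, hj0⟩ := hT f 0 (-g) hf (by simpa using hg)
      (by simpa [eq_neg_iff_add_eq_zero] using hfg)
    exact ⟨j, by simpa using hj, by simpa using hj0⟩
  · intro hT f g h hfg hgh hfh
    obtain ⟨j, hj, hj0⟩ := hT (f - g) (g - h) (by simpa [sub_eq_zero] using hfg)
      (by simpa [sub_eq_zero] using hgh) (by simpa [sub_eq_zero] using hfh)
    exact ⟨j, by simpa using hj, by simpa using hj0⟩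

variable [FiniteDimensional (ZMod 3) V] {c : ι → V}

theorem isAffineBlocking_of_isTrifferent (hspan : span (ZMod 3) (range c) = ⊤)
    (hT : IsTrifferent (range fun (f : Dual (ZMod 3) V) j => f (c j))) :
    IsAffineBlocking (ZMod 3) ({0} ∪ range c ∪ -range c) 2 := by
  rw [isTrifferent_range_dual_iff] at hT
  rw [isAffineBlocking_iff_forall_linearMap]
  intro φ x
  by_cases hx : φ x = 0
  · exact ⟨0, by simp, by rw [map_zero, hx]⟩
  obtain ⟨e, he⟩ := exists_linearEquiv_apply_eq (K := ZMod 3) hx one_ne_zero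
  have hc : ∀ h : Dual (ZMod 3) V, h x ≠ 0 → ∃ j, h (c j) ≠ 0 := by
    intro h hhx
    by_contra! hvanish
    exact hhx (by rw [LinearMap.ext_on_range hspan (g := 0) hvanish]; rfl)
  set ψ := e.toLinearMap ∘ₗ φ
  obtain ⟨j, hj, hj0⟩ := hT (LinearMap.proj 0 ∘ₗ ψ) (LinearMap.proj 1 ∘ₗ ψ)
    (hc _ (by simp [ψ, he])) (hc _ (by simp [ψ, he])) (hc _ (by simp [ψ, he]; decide))
  rcases (ZMod3.eq_one_or_eq_neg_one_iff (ψ (c j))).mpr ⟨hj, hj0⟩ with h | h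
  · exact ⟨c j, Or.inl (Or.inr ⟨j, rfl⟩), e.injective (h.trans he.symm)⟩
  · exact ⟨-c j, Or.inr (by simp),
      e.injective (by rw [map_neg, map_neg, he, show e (φ (c j)) = -1 from h, neg_neg])⟩

theorem isTrifferent_of_isAffineBlocking
    (hB : IsAffineBlocking (ZMod 3) ({0} ∪ range c ∪ -range c) 2) :
    IsTrifferent (range fun (f : Dual (ZMod 3) V) j => f (c j)) := by
  rw [isAffineBlocking_iff_forall_linearMap] at hB
  rw [isTrifferent_range_dual_iff]
  intro f g hf hg hfg
  have hne : ∀ h : Dual (ZMod 3) V, (∃ j, h (c j) ≠ 0) → h ≠ 0 := by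
    rintro h ⟨j, hj⟩ rfl
    exact hj rfl
  obtain ⟨x, hfx, hgx⟩ :=
    ZMod3.exists_apply_eq_one_and_apply_eq_one (hne f hf) (hne g hg) (hne _ hfg)
  set ψ : V →ₗ[ZMod 3] (Fin 2 → ZMod 3) := LinearMap.pi ![f, g]
  have hψx : ψ x = 1 := by
    ext i
    fin_cases i <;> simp [ψ, hfx, hgx]
  obtain ⟨b, (hb | ⟨j, rfl⟩) | ⟨j, hj⟩, hψb⟩ := hB ψ x
  · rw [mem_singleton_iff.mp hb, map_zero, hψx] at hψb
    exact absurd (congrFun hψb 0) zero_ne_one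
  · exact ⟨j, (ZMod3.eq_one_or_eq_neg_one_iff _).mp (Or.inl (hψb.trans hψx))⟩
  · exact ⟨j, (ZMod3.eq_one_or_eq_neg_one_iff (ψ (c j))).mp
      (Or.inr (by rw [hj, map_neg, hψb, hψx]))⟩

end Trifferent

/-- Let `G ∈ 𝔽_3^{k×n}` have rank `k`, let `B` be its set of columns and `C` its row
space. Then `C` is a linear trifferent code if and only if `{0} ∪ B ∪ (-B)` is an affine
`2`-blocking set in `𝔽_3^k`. -/
theorem trifferent_iff_blocking (k n : ℕ)
    (G : Matrix (Fin k) (Fin n) (ZMod 3)) (hrank : G.rank = k) :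
    (∀ x ∈ Set.range fun u : Fin k → ZMod 3 => Matrix.vecMul u G,
     ∀ y ∈ Set.range fun u : Fin k → ZMod 3 => Matrix.vecMul u G,
     ∀ z ∈ Set.range fun u : Fin k → ZMod 3 => Matrix.vecMul u G,
       x ≠ y → y ≠ z → x ≠ z →
         ∃ i : Fin n, ({x i, y i, z i} : Set (ZMod 3)) = Set.univ)
    ↔ (∀ W : Submodule (ZMod 3) (Fin k → ZMod 3), Module.finrank (ZMod 3) W = k - 2 →
        ∀ x : Fin k → ZMod 3,
          ∃ b ∈ ({0} ∪ Set.range (fun j i => G i j) ∪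
              -Set.range (fun j i => G i j) : Set (Fin k → ZMod 3)),
            b - x ∈ W) := by
  have hspan := G.span_range_col_eq_top (by rw [hrank, Fintype.card_fin])
  have key : IsTrifferent (range fun u => vecMul u G) ↔
      IsAffineBlocking (ZMod 3)
        ({0} ∪ range (fun j i => G i j) ∪ -range (fun j i => G i j)) 2 := by
    rw [range_vecMul_eq_range_dual]
    exact ⟨isAffineBlocking_of_isTrifferent hspan, isTrifferent_of_isAffineBlocking⟩
  rwa [IsAffineBlocking, finrank_fin_fun] at key
end

section
/- A linear code $C \subseteq \mathbb{F}_3^n$ is trifferent if and only if it is minimal. -/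
private lemma key3 (a b c : ZMod 3) :
    ({a, b, c} : Set (ZMod 3)) = Set.univ ↔ a ≠ b ∧ b ≠ c ∧ a ≠ c := by
  rw [Set.eq_univ_iff_forall]
  simp only [Set.mem_insert_iff, Set.mem_singleton_iff]
  revert a b c; decide

/-- A linear code `C ⊆ 𝔽_3^n` is trifferent (any three pairwise distinct codewords are
separated in some coordinate) if and only if it is minimal (no codeword's support is
strictly contained in another codeword's support, except for the zero codeword). -/
theorem trifferent_iff_minimal (n : ℕ) (C : Submodule (ZMod 3) (Fin n → ZMod 3)) :
    (∀ x ∈ C, ∀ y ∈ C, ∀ z ∈ C, x ≠ y → y ≠ z → x ≠ z →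
        ∃ i : Fin n, ({x i, y i, z i} : Set (ZMod 3)) = Set.univ)
    ↔ (∀ u ∈ C, ∀ v ∈ C, {i | u i ≠ 0} ⊂ {i | v i ≠ 0} → u = 0) := by
  constructor
  · intro h u hu v hv hsub
    by_contra hu0
    have hvu : v - u ∈ C := C.sub_mem hv hu
    have h1 : (0 : Fin n → ZMod 3) ≠ u := fun e => hu0 e.symm
    have h2 : u ≠ v - u := by
      intro e
      have hveq : ∀ i, v i = u i + u i := by
        intro i
        have := congrFun e i
        simp only [Pi.sub_apply] at this
        linear_combination -this
      apply hsub.ne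
      ext i
      simp only [Set.mem_setOf_eq, hveq i]
      revert i
      have : ∀ s : ZMod 3, s ≠ 0 ↔ s + s ≠ 0 := by decide
      exact fun i => this (u i)
    have h3 : (0 : Fin n → ZMod 3) ≠ v - u := by
      intro e
      have hvu' : v = u := by
        have := e.symm
        rwa [sub_eq_zero] at this
      exact hsub.ne (by rw [hvu'])
    obtain ⟨i, hi⟩ := h 0 C.zero_mem u hu (v - u) hvu h1 h2 h3
    simp only [Pi.zero_apply, Pi.sub_apply] at hi
    rw [key3] at hi
    obtain ⟨h01, h12, h02⟩ := hi
    have hui : u i ≠ 0 := fun e => h01 e.symm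
    have hvi : v i ≠ 0 := hsub.1 hui
    have : ∀ a b : ZMod 3, a ≠ 0 → b ≠ 0 → a ≠ b - a → ¬(0 ≠ b - a) := by decide
    exact this (u i) (v i) hui hvi h12 h02
  · intro h x hx y hy z hz hxy hyz hxz
    by_contra hno
    push_neg at hno
    set a : Fin n → ZMod 3 := x - y with ha
    set b : Fin n → ZMod 3 := y - z with hb
    have haC : a ∈ C := C.sub_mem hx hy
    have hbC : b ∈ C := C.sub_mem hy hz
    have ha0 : a ≠ 0 := fun e => hxy (by rwa [ha, sub_eq_zero] at e)
    have hb0 : b ≠ 0 := fun e => hyz (by rwa [hb, sub_eq_zero] at e)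
    have hab0 : a + b ≠ 0 := by
      intro e
      apply hxz
      have : x - z = 0 := by rw [← e, ha, hb]; ring
      rwa [sub_eq_zero] at this
    -- pointwise: for each i, a i = 0 ∨ b i = 0 ∨ a i + b i = 0
    have hpt : ∀ i, a i = 0 ∨ b i = 0 ∨ a i + b i = 0 := by
      intro i
      have := hno i
      rw [Ne, key3] at this
      by_contra hc
      push_neg at hc
      obtain ⟨c1, c2, c3⟩ := hc
      apply this
      refine ⟨?_, ?_, ?_⟩
      · intro e; exact c1 (by simp [ha, sub_eq_zero.mpr e])
      · intro e; exact c2 (by simp [hb, sub_eq_zero.mpr e])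
      · intro e
        apply c3
        have : a i + b i = x i - z i := by simp only [ha, hb, Pi.sub_apply]; ring
        rw [this, sub_eq_zero.mpr e]
    by_cases hcase : ∃ j, a j ≠ 0 ∧ b j ≠ 0
    · obtain ⟨j, haj, hbj⟩ := hcase
      have habC : a + b ∈ C := C.add_mem haC hbC
      have hsubC : a - b ∈ C := C.sub_mem haC hbC
      have hss : {i | (a + b) i ≠ 0} ⊂ {i | (a - b) i ≠ 0} := by
        constructor
        · intro i hi
          simp only [Set.mem_setOf_eq, Pi.add_apply] at hi
          simp only [Set.mem_setOf_eq, Pi.sub_apply]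
          have key : ∀ s t : ZMod 3, (s = 0 ∨ t = 0 ∨ s + t = 0) → s + t ≠ 0 → s - t ≠ 0 := by
            decide
          exact key (a i) (b i) (hpt i) hi
        · intro hle
          have haj' : a j + b j = 0 := by
            rcases hpt j with h' | h' | h' <;> first | exact absurd h' haj | exact absurd h' hbj | exact h'
          have hmem : j ∈ {i | (a - b) i ≠ 0} := by
            simp only [Set.mem_setOf_eq, Pi.sub_apply]
            revert haj' haj hbj
            generalize a j = s; generalize b j = t
            revert s t; decide
          have := hle hmem
          simp only [Set.mem_setOf_eq, Pi.add_apply] at this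
          exact this haj'
      exact hab0 (h (a + b) habC (a - b) hsubC hss)
    · push_neg at hcase
      have habC : a + b ∈ C := C.add_mem haC hbC
      have hss : {i | a i ≠ 0} ⊂ {i | (a + b) i ≠ 0} := by
        constructor
        · intro i hi
          simp only [Set.mem_setOf_eq] at hi ⊢
          rw [Pi.add_apply, hcase i hi, add_zero]
          exact hi
        · intro hle
          obtain ⟨j, hbj⟩ : ∃ j, b j ≠ 0 := by
            by_contra hc
            push_neg at hc
            exact hb0 (funext hc)
          have haj : a j = 0 := by
            by_contra hc
            exact hbj (hcase j hc)
          have : j ∈ {i | (a + b) i ≠ 0} := by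
            simp only [Set.mem_setOf_eq, Pi.add_apply, haj, zero_add]
            exact hbj
          exact (hle this) haj
      exact ha0 (h a haC (a + b) habC hss)
end

section
/- If $C \subseteq \mathbb{F}_3^n$ is a linear code that is not trifferent, then there exist nonzero $u, v \in C$ with $\mathrm{supp}(u) \subsetneq \mathrm{supp}(u+v)$ or $\mathrm{supp}(v) \subsetneq \mathrm{supp}(u+v)$; in particular $C$ is not minimal. -/
lemma key_zmod3 : ∀ p q r : ZMod 3, (¬ ∀ t : ZMod 3, t = p ∨ t = q ∨ t = r) →
    (((p - r) + (q - r) ≠ 0 ↔ (p - r ≠ 0 ∨ q - r ≠ 0)) ∧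
      (p - r = 0 ∨ q - r = 0 ∨ p - r = q - r)) := by decide

/-- If a linear code `C ⊆ 𝔽_3^n` is not trifferent, then there are nonzero codewords
`u, v ∈ C` with `supp(u) ⊊ supp(u+v)` or `supp(v) ⊊ supp(u+v)`; in particular `C` is
not minimal. -/
theorem not_trifferent_not_minimal (n : ℕ) (C : Submodule (ZMod 3) (Fin n → ZMod 3))
    (h : ¬ (∀ x ∈ C, ∀ y ∈ C, ∀ z ∈ C, x ≠ y → y ≠ z → x ≠ z →
        ∃ i : Fin n, ({x i, y i, z i} : Set (ZMod 3)) = Set.univ)) :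
    (∃ u ∈ C, ∃ v ∈ C, u ≠ 0 ∧ v ≠ 0 ∧
        ({i | u i ≠ 0} ⊂ {i | (u + v) i ≠ 0} ∨ {i | v i ≠ 0} ⊂ {i | (u + v) i ≠ 0})) ∧
    ¬ (∀ u ∈ C, ∀ v ∈ C, {i | u i ≠ 0} ⊂ {i | v i ≠ 0} → u = 0) := by
  push_neg at h
  obtain ⟨x, hx, y, hy, z, hz, hxy, hyz, hxz, hni⟩ := h
  set a := x - z with ha_def
  set b := y - z with hb_def
  have ha : a ∈ C := sub_mem hx hz
  have hb : b ∈ C := sub_mem hy hz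
  have ha0 : a ≠ 0 := sub_ne_zero.mpr hxz
  have hb0 : b ≠ 0 := sub_ne_zero.mpr hyz
  have hab : a ≠ b := fun e => hxy (by
    have := sub_left_injective (G := Fin n → ZMod 3) e
    exact this)
  have key : ∀ i, ((a + b) i ≠ 0 ↔ (a i ≠ 0 ∨ b i ≠ 0)) ∧
      (a i = 0 ∨ b i = 0 ∨ a i = b i) := by
    intro i
    have hi := hni i
    have hi' : ¬ ∀ t : ZMod 3, t = x i ∨ t = y i ∨ t = z i := by
      intro hall
      apply hi
      ext t
      simp [hall t]
    have := key_zmod3 (x i) (y i) (z i) hi'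
    simpa [ha_def, hb_def] using this
  have hsubA : {i | a i ≠ 0} ⊆ {i | (a + b) i ≠ 0} := fun i hi =>
    ((key i).1).mpr (Or.inl hi)
  have hsubB : {i | b i ≠ 0} ⊆ {i | (a + b) i ≠ 0} := fun i hi =>
    ((key i).1).mpr (Or.inr hi)
  have hne : {i | a i ≠ 0} ≠ {i | (a + b) i ≠ 0} ∨
      {i | b i ≠ 0} ≠ {i | (a + b) i ≠ 0} := by
    by_contra hc
    push_neg at hc
    apply hab
    funext i
    have hAB : {i | a i ≠ 0} = {i | b i ≠ 0} := hc.1.trans hc.2.symm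
    have hmem : a i ≠ 0 ↔ b i ≠ 0 := by
      constructor
      · intro hi; exact (hAB ▸ hi : i ∈ {i | b i ≠ 0})
      · intro hi; exact (hAB.symm ▸ hi : i ∈ {i | a i ≠ 0})
    rcases (key i).2 with h1 | h1 | h1
    · have : b i = 0 := by
        by_contra hbne
        exact (hmem.mpr hbne) h1
      rw [h1, this]
    · have : a i = 0 := by
        by_contra hane
        exact (hmem.mp hane) h1
      rw [h1, this]
    · exact h1
  have hstrict : {i | a i ≠ 0} ⊂ {i | (a + b) i ≠ 0} ∨
      {i | b i ≠ 0} ⊂ {i | (a + b) i ≠ 0} := by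
    rcases hne with hne | hne
    · exact Or.inl ⟨hsubA, fun hsup => hne (Set.Subset.antisymm hsubA hsup)⟩
    · exact Or.inr ⟨hsubB, fun hsup => hne (Set.Subset.antisymm hsubB hsup)⟩
  refine ⟨⟨a, ha, b, hb, ha0, hb0, hstrict⟩, ?_⟩
  intro H
  rcases hstrict with hs | hs
  · exact ha0 (H a ha (a + b) (add_mem ha hb) hs)
  · exact hb0 (H b hb (a + b) (add_mem ha hb) hs)
end

section
/- Every affine $s$-blocking set in $\mathbb{F}_q^k$ has size at least $(q^s - 1)(k - s + 1) + 1$, for $1 \le s \le k$. -/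
open Module Finset MvPolynomial
variable {F : Type} [Field F] [Fintype F]



section Defs

variable (F : Type) [Field F] [Fintype F]

/-- `A` meets every coset of every codimension-`s` subspace that avoids `0`. -/
def Blk0 (s : ℕ) {V : Type} [AddCommGroup V] [Module F V] (A : Finset V) : Prop :=
  ∀ W : Submodule F V, Module.finrank F W + s = Module.finrank F V →
    ∀ x : V, x ∉ W → ∃ a ∈ A, a - x ∈ W

/-- `B` meets every coset of every codimension-`s` subspace. -/
def BlkA (s : ℕ) {V : Type} [AddCommGroup V] [Module F V] (B : Finset V) : Prop :=
  ∀ W : Submodule F V, Module.finrank F W + s = Module.finrank F V →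
    ∀ x : V, ∃ b ∈ B, b - x ∈ W

/-- The statement `G(s)`: avoiding-0 blocking sets have at least `(q^s-1)(n-s+1)` points. -/
def Gstmt (s : ℕ) : Prop :=
  ∀ (V : Type) [AddCommGroup V] [Module F V] [FiniteDimensional F V] (A : Finset V),
    s ≤ Module.finrank F V → (0 : V) ∉ A → Blk0 F s A →
    (Fintype.card F ^ s - 1) * (Module.finrank F V - s + 1) ≤ A.card

end Defs

section Basic


/-- A nonzero functional on a finite dimensional space has kernel of codimension 1. -/
lemma ker_functional_rank (V : Type) [AddCommGroup V] [Module F V] [FiniteDimensional F V]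
    (φ : V →ₗ[F] F) (hφ : φ ≠ 0) :
    Module.finrank F (LinearMap.ker φ) + 1 = Module.finrank F V := by
  obtain ⟨v, hv⟩ : ∃ v, φ v ≠ 0 := by
    by_contra h
    push_neg at h
    exact hφ (LinearMap.ext fun v => by simp [h v])
  have hr : LinearMap.range φ = ⊤ := by
    rw [eq_top_iff]
    intro c _
    refine ⟨(c * (φ v)⁻¹) • v, ?_⟩
    simp [mul_assoc, inv_mul_cancel₀ hv]
  have h2 := LinearMap.finrank_range_add_finrank_ker φ
  rw [hr, finrank_top, finrank_self] at h2
  omega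

/-- Existence of a subspace of any codimension. -/
lemma exists_codim (V : Type) [AddCommGroup V] [Module F V] [FiniteDimensional F V]
    (s : ℕ) (hsn : s ≤ Module.finrank F V) :
    ∃ W : Submodule F V, Module.finrank F W + s = Module.finrank F V := by
  classical
  let b := Module.finBasis F V
  let v : Fin (Module.finrank F V - s) → V := fun i => b (Fin.castLE (by omega) i)
  have li : LinearIndependent F v :=
    b.linearIndependent.comp _ (Fin.castLE_injective _)
  refine ⟨Submodule.span F (Set.range v), ?_⟩
  rw [finrank_span_eq_card li]
  simp only [Fintype.card_fin]
  omega

end Basic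




/-- Brouwer–Schrijver / Jamison: coordinates version. If a finite set of vectors contains,
for every nonzero `c`, a vector with `⟨a, c⟩ = 1`, then it has at least `(q-1)n` elements. -/
lemma jamison_concrete (n : ℕ) (A : Finset (Fin n → F))
    (hb : ∀ c : Fin n → F, c ≠ 0 → ∃ a ∈ A, (∑ i, a i * c i) = 1) :
    (Fintype.card F - 1) * n ≤ A.card := by
  classical
  by_contra hlt
  push_neg at hlt
  set P : MvPolynomial (Fin n) F :=
    ∏ a ∈ A, ((∑ i, MvPolynomial.C (a i) * MvPolynomial.X i) - 1) with hP
  have hev : ∀ c : Fin n → F, MvPolynomial.eval c P = ∏ a ∈ A, ((∑ i, a i * c i) - 1) := by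
    intro c
    rw [hP, map_prod]
    refine Finset.prod_congr rfl fun a _ => ?_
    simp [map_sub, map_sum]
  have hdeg : P.totalDegree < (Fintype.card F - 1) * Fintype.card (Fin n) := by
    rw [Fintype.card_fin]
    refine lt_of_le_of_lt ?_ hlt
    calc P.totalDegree ≤ ∑ a ∈ A, ((∑ i, MvPolynomial.C (a i) * MvPolynomial.X i)
          - (1 : MvPolynomial (Fin n) F)).totalDegree := totalDegree_finset_prod _ _
      _ ≤ ∑ _a ∈ A, 1 := by
          refine Finset.sum_le_sum fun a _ => ?_
          have h1 : ((∑ i, MvPolynomial.C (a i) * MvPolynomial.X i)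
              - (1 : MvPolynomial (Fin n) F)).totalDegree
              ≤ max (∑ i, MvPolynomial.C (a i) * MvPolynomial.X i :
                  MvPolynomial (Fin n) F).totalDegree
                (1 : MvPolynomial (Fin n) F).totalDegree := totalDegree_sub _ _
          have h2 : (∑ i, MvPolynomial.C (a i) * MvPolynomial.X i :
              MvPolynomial (Fin n) F).totalDegree ≤ 1 := by
            refine (totalDegree_finset_sum _ _).trans (Finset.sup_le fun i _ => ?_)
            exact (totalDegree_mul _ _).trans (by simp [totalDegree_X])
          simp only [totalDegree_one] at h1
          omega
      _ = A.card := by simp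
  have hzero := MvPolynomial.sum_eval_eq_zero P hdeg
  have hsingle : ∑ c : Fin n → F, MvPolynomial.eval c P = MvPolynomial.eval 0 P := by
    refine Finset.sum_eq_single_of_mem 0 (Finset.mem_univ _) fun c _ hc => ?_
    obtain ⟨a, ha, h1⟩ := hb c hc
    rw [hev]
    exact Finset.prod_eq_zero ha (by rw [h1]; ring)
  have hne : MvPolynomial.eval 0 P ≠ 0 := by
    rw [hev]
    simp only [Pi.zero_apply, mul_zero, Finset.sum_const_zero, zero_sub]
    rw [Finset.prod_const]
    exact pow_ne_zero _ (neg_ne_zero.mpr one_ne_zero)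
  rw [hsingle] at hzero
  exact hne hzero




/-- Counting functionals vanishing on a subspace. -/
lemma card_dual_filter (V : Type) [AddCommGroup V] [Module F V] [FiniteDimensional F V]
    [Fintype (V →ₗ[F] F)] (U : Submodule F V)
    [DecidablePred fun φ : V →ₗ[F] F => U ≤ LinearMap.ker φ] :
    (Finset.univ.filter fun φ : V →ₗ[F] F => U ≤ LinearMap.ker φ).card
      = Fintype.card F ^ (Module.finrank F V - Module.finrank F U) := by
  classical
  have e1 : {φ : V →ₗ[F] F // U ≤ LinearMap.ker φ} ≃ ((V ⧸ U) →ₗ[F] F) :=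
    { toFun := fun φ => U.liftQ φ.1 φ.2
      invFun := fun ψ => ⟨ψ.comp U.mkQ, fun x hx => by
        have : U.mkQ x = 0 := (Submodule.Quotient.mk_eq_zero U).mpr hx
        simp [LinearMap.mem_ker, this]⟩
      left_inv := fun φ => Subtype.ext (U.liftQ_mkQ φ.1 φ.2)
      right_inv := fun ψ => Submodule.linearMap_qext _ (U.liftQ_mkQ _ _) }
  haveI : Fintype ((V ⧸ U) →ₗ[F] F) := Fintype.ofEquiv _ e1
  rw [← Fintype.card_subtype, Fintype.card_congr e1]
  let bq := Module.finBasis F (V ⧸ U)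
  rw [Fintype.card_congr ((bq.constr F (M' := F)).symm.toEquiv)]
  rw [Fintype.card_fun, Fintype.card_fin]
  have h1 := Submodule.finrank_quotient_add_finrank U
  have h2 : Module.finrank F (V ⧸ U) = Module.finrank F V - Module.finrank F U := by omega
  rw [h2]

/-- The base case `G(1)`: Jamison's bound for hyperplanes, abstract version. -/
lemma g1 : Gstmt F 1 := by
  intro V _ _ _ A hsn hA0 hblk
  classical
  set n := Module.finrank F V with hn
  let b := Module.finBasis F V
  let e : V ≃ₗ[F] (Fin n → F) := b.equivFun
  have key : ∀ c : Fin n → F, c ≠ 0 → ∃ a' ∈ A.image e, (∑ i, a' i * c i) = 1 := by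
    intro c hc
    let ψ : (Fin n → F) →ₗ[F] F :=
      { toFun := fun v => ∑ i, v i * c i
        map_add' := fun v w => by simp [add_mul, Finset.sum_add_distrib]
        map_smul' := fun r v => by simp [smul_eq_mul, mul_assoc, Finset.mul_sum]
      }
    let φ : V →ₗ[F] F := ψ.comp (e : V →ₗ[F] (Fin n → F))
    have hφ : φ ≠ 0 := by
      obtain ⟨i₀, hi₀⟩ : ∃ i, c i ≠ 0 := by
        by_contra h
        push_neg at h
        exact hc (funext fun i => h i)
      intro h0
      have : φ (e.symm (Pi.single i₀ 1)) = c i₀ := by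
        simp [φ, ψ, Pi.single_apply]
      rw [h0] at this
      simp at this
      exact hi₀ this.symm
    obtain ⟨v, hv⟩ : ∃ v, φ v ≠ 0 := by
      by_contra h
      push_neg at h
      exact hφ (LinearMap.ext fun v => by simp [h v])
    set x := (φ v)⁻¹ • v with hx
    have hφx : φ x = 1 := by
      simp [hx, smul_eq_mul, inv_mul_cancel₀ hv]
    have hxW : x ∉ LinearMap.ker φ := by
      simp [LinearMap.mem_ker, hφx]
    have hWrank : Module.finrank F (LinearMap.ker φ) + 1 = n := ker_functional_rank V φ hφ
    obtain ⟨a, ha, haw⟩ := hblk (LinearMap.ker φ) hWrank x hxW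
    refine ⟨e a, Finset.mem_image_of_mem _ ha, ?_⟩
    have hφa : φ a = 1 := by
      have h1 : φ a - φ x = 0 := by rw [← map_sub]; exact LinearMap.mem_ker.mp haw
      rw [sub_eq_zero.mp h1, hφx]
    simpa [φ, ψ] using hφa
  have hj := jamison_concrete n (A.image e) key
  rw [Finset.card_image_of_injective A e.injective] at hj
  calc (Fintype.card F ^ 1 - 1) * (n - 1 + 1) = (Fintype.card F - 1) * n := by
        rw [pow_one]; congr 1; omega
    _ ≤ A.card := hj

/-- The averaging step: if `A` blocks all codimension-`s` flats avoiding `0`, avoids `0`,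
and avoids a codimension-`s` subspace `W`, then `|A| ≥ (q^s-1)(n-s+1)`. -/
lemma avg (s : ℕ) (hs2 : 2 ≤ s) (hG : Gstmt F (s - 1))
    (V : Type) [AddCommGroup V] [Module F V] [FiniteDimensional F V] (A : Finset V)
    (W : Submodule F V) (hW : Module.finrank F W + s = Module.finrank F V)
    (hA0 : (0 : V) ∉ A) (hAW : ∀ a ∈ A, a ∉ W) (hblk : Blk0 F s A) :
    (Fintype.card F ^ s - 1) * (Module.finrank F V - s + 1) ≤ A.card := by
  classical
  have hq2 : 2 ≤ Fintype.card F := Fintype.one_lt_card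
  have hsn : s ≤ Module.finrank F V := by omega
  haveI : Fintype (V →ₗ[F] F) :=
    Fintype.ofEquiv _ (((Module.finBasis F V).constr F (M' := F)).toEquiv)
  set Φ : Finset (V →ₗ[F] F) :=
    Finset.univ.filter (fun φ : V →ₗ[F] F => W ≤ LinearMap.ker φ ∧ φ ≠ 0) with hΦ
  have hΦcard : Φ.card = Fintype.card F ^ s - 1 := by
    have h0 : (0 : V →ₗ[F] F) ∈ Finset.univ.filter
        (fun φ : V →ₗ[F] F => W ≤ LinearMap.ker φ) := by
      simp [LinearMap.ker_zero]
    have heq : Φ = (Finset.univ.filter (fun φ : V →ₗ[F] F => W ≤ LinearMap.ker φ)).erase 0 := by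
      ext φ
      simp only [hΦ, Finset.mem_filter, Finset.mem_erase, Finset.mem_univ, true_and]
      tauto
    rw [heq, Finset.card_erase_of_mem h0, card_dual_filter]
    have h2 : Module.finrank F V - Module.finrank F W = s := by omega
    rw [h2]
  have hper : ∀ φ ∈ Φ, (Fintype.card F ^ (s-1) - 1) * (Module.finrank F V - s + 1)
      ≤ (A.filter fun a => a ∈ LinearMap.ker φ).card := by
    intro φ hφ
    have hφ0 : φ ≠ 0 := (Finset.mem_filter.mp hφ).2.2
    have hHrank : Module.finrank F (LinearMap.ker φ) + 1 = Module.finrank F V :=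
      ker_functional_rank V φ hφ0
    set H : Submodule F V := LinearMap.ker φ with hH
    set AH : Finset H := A.subtype (fun a => a ∈ H) with hAH
    have hAHcard : AH.card = (A.filter fun a => a ∈ H).card := Finset.card_subtype _ _
    have hAH0 : (0 : H) ∉ AH := by
      intro h
      have := Finset.mem_subtype.mp h
      simp only [ZeroMemClass.coe_zero] at this
      exact hA0 this
    have hAHblk : Blk0 F (s-1) AH := by
      intro W' hW' x' hx'
      set Wm : Submodule F V := W'.map H.subtype with hWm
      have hWmrank : Module.finrank F Wm = Module.finrank F W' :=
        Submodule.finrank_map_subtype_eq H W'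
      have hWmn : Module.finrank F Wm + s = Module.finrank F V := by omega
      have hxm : (x' : V) ∉ Wm := by
        intro hmem
        obtain ⟨w', hw', hww⟩ := Submodule.mem_map.mp hmem
        have hwx : w' = x' := Subtype.ext hww
        exact hx' (hwx ▸ hw')
      obtain ⟨a, ha, haw⟩ := hblk Wm hWmn (x' : V) hxm
      have haH : a ∈ H := by
        have h1 : a - (x' : V) ∈ H := Submodule.map_subtype_le H W' haw
        have h2 := H.add_mem h1 x'.2
        simpa using h2
      refine ⟨⟨a, haH⟩, Finset.mem_subtype.mpr ha, ?_⟩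
      obtain ⟨w', hw', hww⟩ := Submodule.mem_map.mp haw
      have hwx : w' = ⟨a, haH⟩ - x' := Subtype.ext (by simpa using hww)
      exact hwx ▸ hw'
    have hGH := hG H AH (by omega) hAH0 hAHblk
    have harith : Module.finrank F H - (s-1) + 1 = Module.finrank F V - s + 1 := by omega
    rw [harith] at hGH
    calc (Fintype.card F ^ (s-1) - 1) * (Module.finrank F V - s + 1) ≤ AH.card := hGH
      _ = _ := hAHcard
  have hpera : ∀ a ∈ A, (Φ.filter fun φ => a ∈ LinearMap.ker φ).card
      = Fintype.card F ^ (s-1) - 1 := by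
    intro a ha
    have ha0 : a ≠ 0 := fun h => hA0 (h ▸ ha)
    have haW : a ∉ W := hAW a ha
    have hinf : W ⊓ Submodule.span F {a} = ⊥ := by
      rw [eq_bot_iff]
      intro x hx
      obtain ⟨hxW, hxs⟩ := Submodule.mem_inf.mp hx
      obtain ⟨c, rfl⟩ := Submodule.mem_span_singleton.mp hxs
      rcases eq_or_ne c 0 with h | h
      · simp [h]
      · exfalso
        apply haW
        have h2 := W.smul_mem c⁻¹ hxW
        rwa [smul_smul, inv_mul_cancel₀ h, one_smul] at h2
    have hsup : Module.finrank F ↥(W ⊔ Submodule.span F {a})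
        = (Module.finrank F V - s) + 1 := by
      have h1 := Submodule.finrank_sup_add_finrank_inf_eq W (Submodule.span F {a})
      rw [hinf, finrank_bot, finrank_span_singleton ha0] at h1
      omega
    have h0 : (0 : V →ₗ[F] F) ∈ Finset.univ.filter
        (fun φ : V →ₗ[F] F => (W ⊔ Submodule.span F {a}) ≤ LinearMap.ker φ) := by
      simp [LinearMap.ker_zero]
    have heq : Φ.filter (fun φ => a ∈ LinearMap.ker φ)
        = (Finset.univ.filter
            (fun φ : V →ₗ[F] F => (W ⊔ Submodule.span F {a}) ≤ LinearMap.ker φ)).erase 0 := by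
      ext φ
      simp only [hΦ, Finset.filter_filter, Finset.mem_filter, Finset.mem_erase, Finset.mem_univ,
        true_and, sup_le_iff, Submodule.span_singleton_le_iff_mem, LinearMap.mem_ker]
      tauto
    rw [heq, Finset.card_erase_of_mem h0, card_dual_filter, hsup]
    have h3 : Module.finrank F V - (Module.finrank F V - s + 1) = s - 1 := by omega
    rw [h3]
  have hsum : ∑ φ ∈ Φ, (A.filter fun a => a ∈ LinearMap.ker φ).card
      = ∑ a ∈ A, (Φ.filter fun φ => a ∈ LinearMap.ker φ).card := by
    simp only [Finset.card_filter]
    exact Finset.sum_comm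
  have hlow : Φ.card * ((Fintype.card F ^ (s-1) - 1) * (Module.finrank F V - s + 1))
      ≤ ∑ φ ∈ Φ, (A.filter fun a => a ∈ LinearMap.ker φ).card := by
    simpa using Finset.card_nsmul_le_sum Φ _ _ hper
  have hup : ∑ a ∈ A, (Φ.filter fun φ => a ∈ LinearMap.ker φ).card
      = A.card * (Fintype.card F ^ (s-1) - 1) := by
    rw [Finset.sum_congr rfl hpera, Finset.sum_const, smul_eq_mul]
  have hfinal : (Fintype.card F ^ s - 1) *
      ((Fintype.card F ^ (s-1) - 1) * (Module.finrank F V - s + 1))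
      ≤ A.card * (Fintype.card F ^ (s-1) - 1) := by
    rw [← hΦcard, ← hup, ← hsum]
    exact hlow
  have hpos : 0 < Fintype.card F ^ (s-1) - 1 := by
    have h4 : 2 ≤ Fintype.card F ^ (s - 1) := by
      calc 2 ≤ Fintype.card F := hq2
        _ = Fintype.card F ^ 1 := (pow_one _).symm
        _ ≤ Fintype.card F ^ (s-1) := Nat.pow_le_pow_right (by omega) (by omega)
    omega
  have hre : ((Fintype.card F ^ s - 1) * (Module.finrank F V - s + 1)) *
      (Fintype.card F ^ (s-1) - 1)
      ≤ A.card * (Fintype.card F ^ (s-1) - 1) := by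
    calc ((Fintype.card F ^ s - 1) * (Module.finrank F V - s + 1)) *
          (Fintype.card F ^ (s-1) - 1)
        = (Fintype.card F ^ s - 1) *
          ((Fintype.card F ^ (s-1) - 1) * (Module.finrank F V - s + 1)) := by ring
      _ ≤ A.card * (Fintype.card F ^ (s-1) - 1) := hfinal
  exact Nat.le_of_mul_le_mul_right hre hpos

/-- Main statement for full blocking sets, by strong induction on the cardinality. -/
lemma Mlem (s : ℕ) (hs : 1 ≤ s) (hG : Gstmt F (s - 1)) :
    ∀ (N : ℕ) (V : Type) [AddCommGroup V] [Module F V] [FiniteDimensional F V] (B : Finset V),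
      B.card = N → s ≤ Module.finrank F V → BlkA F s B →
      (Fintype.card F ^ s - 1) * (Module.finrank F V - s + 1) + 1 ≤ B.card := by
  intro N
  induction N using Nat.strong_induction_on with
  | _ N ih =>
    intro V _ _ _ B hcard hsn hblk
    classical
    by_cases hcrit : ∃ b₀ ∈ B, ∃ W : Submodule F V,
        (Module.finrank F W + s = Module.finrank F V) ∧ (∀ b ∈ B, b - b₀ ∈ W → b = b₀)
    · obtain ⟨b₀, hb₀, W, hWr, hWc⟩ := hcrit
      set A : Finset V := (B.image (fun x => x - b₀)).erase 0 with hA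
      have hinj : Function.Injective (fun x : V => x - b₀) := by
        intro x y hxy
        simpa using congrArg (fun z => z + b₀) hxy
      have h0mem : (0 : V) ∈ B.image (fun x => x - b₀) :=
        Finset.mem_image.mpr ⟨b₀, hb₀, sub_self b₀⟩
      have hAcard : A.card + 1 = B.card := by
        rw [hA, Finset.card_erase_of_mem h0mem, Finset.card_image_of_injective _ hinj]
        have : 1 ≤ B.card := Finset.card_pos.mpr ⟨b₀, hb₀⟩
        omega
      have hA0 : (0 : V) ∉ A := Finset.notMem_erase _ _
      have hAW : ∀ a ∈ A, a ∉ W := by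
        intro a haA haW
        have haE := Finset.mem_of_mem_erase haA
        obtain ⟨b, hbB, hba⟩ := Finset.mem_image.mp haE
        have : b = b₀ := hWc b hbB (by rwa [hba])
        have ha0 : a = 0 := by rw [← hba, this, sub_self]
        exact (Finset.ne_of_mem_erase haA) ha0
      have hAblk : Blk0 F s A := by
        intro W' hW' x hx
        obtain ⟨b, hbB, hbw⟩ := hblk W' hW' (x + b₀)
        refine ⟨b - b₀, ?_, ?_⟩
        · refine Finset.mem_erase.mpr ⟨?_, Finset.mem_image_of_mem _ hbB⟩
          intro h0
          have hbb : b = b₀ := by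
            have := sub_eq_zero.mp h0; exact this
          rw [hbb] at hbw
          have : -x ∈ W' := by
            have h2 : b₀ - (x + b₀) = -x := by abel
            rwa [h2] at hbw
          exact hx (by simpa using W'.neg_mem this)
        · have h2 : b - b₀ - x = b - (x + b₀) := by abel
          rwa [h2]
      have hbound : (Fintype.card F ^ s - 1) * (Module.finrank F V - s + 1) ≤ A.card := by
        rcases eq_or_lt_of_le hs with h1 | h2
        · -- s = 1
          have hg1 : Gstmt F 1 := g1
          have := hg1 V A (by omega) hA0 (by rw [← h1] at hAblk; exact hAblk)
          rw [← h1]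
          exact this
        · exact avg s h2 hG V A W hWr hA0 hAW hAblk
      omega
    · push_neg at hcrit
      obtain ⟨W₀, hW₀⟩ := exists_codim V s hsn
      obtain ⟨b₀, hb₀, -⟩ := hblk W₀ hW₀ 0
      have hB' : BlkA F s (B.erase b₀) := by
        intro W hWr x
        obtain ⟨b₁, hb₁, hw₁⟩ := hblk W hWr x
        by_cases hb : b₁ = b₀
        · obtain ⟨b₂, hb₂, hw₂, hne⟩ := hcrit b₀ hb₀ W hWr
          refine ⟨b₂, Finset.mem_erase.mpr ⟨hne, hb₂⟩, ?_⟩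
          have h2 : b₂ - x = (b₂ - b₀) + (b₀ - x) := by abel
          rw [h2]
          exact W.add_mem hw₂ (hb ▸ hw₁)
        · exact ⟨b₁, Finset.mem_erase.mpr ⟨hb, hb₁⟩, hw₁⟩
      have hec : (B.erase b₀).card = B.card - 1 := Finset.card_erase_of_mem hb₀
      have hpos : 1 ≤ B.card := Finset.card_pos.mpr ⟨b₀, hb₀⟩
      have hlt : (B.erase b₀).card < N := by omega
      have := ih _ hlt V (B.erase b₀) rfl hsn hB'
      omega

/-- Trivial statement `G(0)`. -/
lemma g0 : Gstmt F 0 := by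
  intro V _ _ _ A _ _ _
  simp

/-- `G(s)` holds for all `s ≥ 1`. -/
lemma Gmain : ∀ s : ℕ, 1 ≤ s → Gstmt F s := by
  intro s
  induction s with
  | zero => omega
  | succ r ihr =>
    intro _
    rcases Nat.eq_zero_or_pos r with hr0 | hr1
    · subst hr0
      exact g1
    · have hGr : Gstmt F r := ihr hr1
      intro V _ _ _ A hsn hA0 hblk
      classical
      by_cases hW : ∃ W : Submodule F V,
          (Module.finrank F W + (r+1) = Module.finrank F V) ∧ ∀ a ∈ A, a ∉ W
      · obtain ⟨W, hW1, hW2⟩ := hW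
        have h := avg (r+1) (by omega) (by simpa using hGr) V A W hW1 hA0 hW2 hblk
        exact h
      · push_neg at hW
        have hfull : BlkA F (r+1) A := by
          intro W hWr x
          by_cases hx : x ∈ W
          · obtain ⟨a, ha, haW⟩ := hW W hWr
            exact ⟨a, ha, W.sub_mem haW hx⟩
          · exact hblk W hWr x hx
        have h := Mlem (r+1) (by omega) (by simpa using hGr) A.card V A rfl hsn hfull
        omega

/-- Every affine `s`-blocking set in `𝔽_q^k` (a set of points meeting every coset of
every `(k-s)`-dimensional vector subspace) has size at least `(q^s-1)(k-s+1)+1`, for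
`1 ≤ s ≤ k`. -/
theorem affine_blocking_lower (q k s : ℕ) (hs : 1 ≤ s) (hsk : s ≤ k)
    (F : Type) [Field F] [Fintype F] (hF : Fintype.card F = q)
    (B : Finset (Fin k → F))
    (hB : ∀ W : Submodule F (Fin k → F), Module.finrank F W = k - s →
      ∀ x : Fin k → F, ∃ b ∈ B, b - x ∈ W) :
    (q ^ s - 1) * (k - s + 1) + 1 ≤ B.card := by
  classical
  have hn : Module.finrank F (Fin k → F) = k := by
    rw [Module.finrank_pi, Fintype.card_fin]
  have hG : Gstmt F (s - 1) := by
    rcases eq_or_lt_of_le hs with h1 | h2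
    · rw [← h1]
      exact g0
    · exact Gmain (s - 1) (by omega)
  have hfull : BlkA F s B := by
    intro W hW x
    refine hB W ?_ x
    rw [hn] at hW
    omega
  have h := Mlem s hs hG B.card (Fin k → F) B rfl (by omega) hfull
  rw [hn, hF] at h
  exact h
end

section
/- For every integer $n \ge 1$, there exists a linear trifferent code in $\mathbb{F}_3^n$ of size at least $\frac{1}{3}(9/5)^{n/4}$; equivalently, setting $k = \lfloor n \log_3(81/25)/8 \rfloor$, there is a linear trifferent code of dimension $k$ and length $n$. -/
open Finset Matrix Function

namespace LinTriffAux

abbrev Vk (k : ℕ) : Type := Fin k → ZMod 3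


lemma z3_ne0 : ∀ l : ZMod 3, l ≠ 0 → l = 1 ∨ l = 2 := by decide
lemma z3_sq : ∀ x : ZMod 3, x ≠ 0 → x * x = 1 := by decide
lemma z3_neg_eq : ∀ x : ZMod 3, -x = x → x = 0 := by decide
lemma z3_triple : ∀ a b c : ZMod 3, a - c ≠ 0 → (a - c) + (b - c) = 0 →
    ∀ d : ZMod 3, d = a ∨ d = b ∨ d = c := by decide
lemma z3_Q : ∀ a b c d : ZMod 3,
    (∀ s t : ZMod 3, ¬(s = 0 ∧ t = 0) → ¬(s * b + t * d = 0 ∧ s * a + t * c ≠ 0)) ↔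
      ∃ l : ZMod 3, a = l * b ∧ c = l * d := by decide
lemma z3_proj : ∀ s t : ZMod 3, ¬(s = 0 ∧ t = 0) →
    ∃ e : ZMod 3, e ≠ 0 ∧ ((s = e ∧ t = 0) ∨ (s = 0 ∧ t = e) ∨ (s = e ∧ t = e) ∨
      (s = e ∧ t = e * 2)) := by decide
lemma z3_B'card : (Finset.univ.filter (fun q : (ZMod 3 × ZMod 3) × (ZMod 3 × ZMod 3) =>
    ∃ l : ZMod 3, q.1.1 = l * q.1.2 ∧ q.2.1 = l * q.2.2)).card = 25 := by decide

lemma z3_smul_ne_zero {k : ℕ} {l : ZMod 3} (hl : l ≠ 0) {x : Vk k} (hx : x ≠ 0) :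
    l • x ≠ 0 := by
  intro h
  apply hx
  calc x = (1 : ZMod 3) • x := (one_smul _ _).symm
    _ = (l * l) • x := by rw [z3_sq l hl]
    _ = l • (l • x) := mul_smul l l x
    _ = 0 := by rw [h, smul_zero]

lemma neg_ne_self {k : ℕ} {x : Vk k} (hx : x ≠ 0) : -x ≠ x := by
  intro h
  apply hx
  funext i
  exact z3_neg_eq (x i) (congrFun h i)

def Kpred {k : ℕ} (u w : Vk k) (p : Vk k × Vk k) : Prop :=
  ∀ s t : ZMod 3, ¬(s = 0 ∧ t = 0) →
    ¬(w ⬝ᵥ (s • p.1 + t • p.2) = 0 ∧ u ⬝ᵥ (s • p.1 + t • p.2) ≠ 0)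

instance {k : ℕ} (u w : Vk k) : DecidablePred (Kpred u w) := fun _ => by
  unfold Kpred; infer_instance

lemma dot_comb {k : ℕ} (u g h : Vk k) (s t : ZMod 3) :
    u ⬝ᵥ (s • g + t • h) = s * (u ⬝ᵥ g) + t * (u ⬝ᵥ h) := by
  rw [dotProduct_add, dotProduct_smul, dotProduct_smul, smul_eq_mul, smul_eq_mul]

lemma Kpred_iff {k : ℕ} (u w : Vk k) (p : Vk k × Vk k) :
    Kpred u w p ↔ ∃ l : ZMod 3, (u ⬝ᵥ p.1) = l * (w ⬝ᵥ p.1) ∧ (u ⬝ᵥ p.2) = l * (w ⬝ᵥ p.2) := by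
  rw [← z3_Q (u ⬝ᵥ p.1) (w ⬝ᵥ p.1) (u ⬝ᵥ p.2) (w ⬝ᵥ p.2)]
  unfold Kpred
  refine forall_congr' fun s => forall_congr' fun t => imp_congr Iff.rfl ?_
  rw [dot_comb, dot_comb]

lemma Kpred_neg_left {k : ℕ} (u w : Vk k) (p : Vk k × Vk k) :
    Kpred (-u) w p ↔ Kpred u w p := by
  unfold Kpred
  refine forall_congr' fun s => forall_congr' fun t => imp_congr Iff.rfl ?_
  rw [neg_dotProduct, ne_eq, neg_eq_zero]

lemma Kpred_neg_right {k : ℕ} (u w : Vk k) (p : Vk k × Vk k) :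
    Kpred u (-w) p ↔ Kpred u w p := by
  unfold Kpred
  refine forall_congr' fun s => forall_congr' fun t => imp_congr Iff.rfl ?_
  rw [neg_dotProduct, neg_eq_zero]

lemma fiber_mul_card {α β : Type*} [Fintype α] [DecidableEq α] [AddCommGroup α]
    [Fintype β] [DecidableEq β] [AddCommGroup β]
    (f : α → β) (hadd : ∀ x y, f (x + y) = f x + f y)
    (hsurj : ∀ b, ∃ a, f a = b) (b : β) :
    (univ.filter fun a => f a = b).card * Fintype.card β = Fintype.card α := by
  have h0 : f 0 = 0 := by
    have h := hadd 0 0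
    rw [add_zero] at h
    exact (add_eq_left.mp h.symm)
  have hneg : ∀ x, f (-x) = -f x := by
    intro x
    have h := hadd x (-x)
    rw [add_neg_cancel, h0] at h
    exact (neg_eq_of_add_eq_zero_right h.symm).symm
  have hsub : ∀ x y, f (x - y) = f x - f y := by
    intro x y
    rw [sub_eq_add_neg, hadd, hneg, sub_eq_add_neg]
  have key : ∀ b : β, (univ.filter fun a => f a = b).card =
      (univ.filter fun a => f a = 0).card := by
    intro b
    obtain ⟨a₀, ha₀⟩ := hsurj b
    apply Finset.card_bij (fun a _ => a - a₀)
    · intro a ha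
      simp only [mem_filter, mem_univ, true_and] at ha ⊢
      rw [hsub, ha, ha₀, sub_self]
    · intro a _ a' _ h
      have := congrArg (· + a₀) h
      simpa [sub_add_cancel] using this
    · intro b' hb'
      simp only [mem_filter, mem_univ, true_and] at hb'
      refine ⟨b' + a₀, ?_, ?_⟩
      · simp only [mem_filter, mem_univ, true_and]
        rw [hadd, hb', ha₀, zero_add]
      · rw [add_sub_cancel_right]
  have total : Fintype.card α = ∑ b ∈ (univ : Finset β), (univ.filter fun a => f a = b).card := by
    rw [← Finset.card_univ]
    exact Finset.card_eq_sum_card_fiberwise (fun x _ => mem_univ _)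
  rw [key b, total, Finset.sum_congr rfl (fun b _ => key b), Finset.sum_const,
    Finset.card_univ, smul_eq_mul, mul_comm]

lemma ann {k : ℕ} (u w : Vk k) (hw : w ≠ 0) (h : ∀ g, w ⬝ᵥ g = 0 → u ⬝ᵥ g = 0) :
    ∃ l : ZMod 3, u = l • w := by
  obtain ⟨i₀, hi₀⟩ : ∃ i, w i ≠ 0 := by
    by_contra hc
    push_neg at hc
    exact hw (funext fun i => (hc i))
  set A : ZMod 3 := u ⬝ᵥ Pi.single i₀ 1 with hA
  refine ⟨A * w i₀, ?_⟩
  funext i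
  have hg : w ⬝ᵥ ((w i₀) • (Pi.single i 1 : Vk k) - (w i) • (Pi.single i₀ 1 : Vk k)) = 0 := by
    rw [dotProduct_sub, dotProduct_smul, dotProduct_smul, dotProduct_single, dotProduct_single,
      smul_eq_mul, smul_eq_mul, mul_one, mul_one, mul_comm]
    exact sub_self _
  have hu := h _ hg
  rw [dotProduct_sub, dotProduct_smul, dotProduct_smul, dotProduct_single,
    smul_eq_mul, smul_eq_mul, mul_one, ← hA, sub_eq_zero] at hu
  -- hu : w i₀ * u i = w i * A
  have h2 : w i₀ * (w i₀ * u i) = w i₀ * (w i * A) := by rw [hu]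
  rw [← mul_assoc, z3_sq _ hi₀, one_mul] at h2
  rw [Pi.smul_apply, smul_eq_mul, h2]
  ring

lemma surj1 {k : ℕ} (u : Vk k) (hu : u ≠ 0) : ∀ a : ZMod 3, ∃ g, u ⬝ᵥ g = a := by
  obtain ⟨i₀, hi₀⟩ : ∃ i, u i ≠ 0 := by
    by_contra hc
    push_neg at hc
    exact hu (funext fun i => (hc i))
  intro a
  refine ⟨(Pi.single i₀ (a * u i₀) : Vk k), ?_⟩
  rw [dotProduct_single, ← mul_assoc, mul_comm (u i₀) a, mul_assoc, z3_sq _ hi₀, mul_one]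

lemma surj2 {k : ℕ} (u w : Vk k) (hu : u ≠ 0) (hw : w ≠ 0)
    (hadm : ∀ l : ZMod 3, l ≠ 0 → w ≠ l • u) :
    ∀ q : ZMod 3 × ZMod 3, ∃ g, u ⬝ᵥ g = q.1 ∧ w ⬝ᵥ g = q.2 := by
  have h1 : ¬ ∀ g, w ⬝ᵥ g = 0 → u ⬝ᵥ g = 0 := by
    intro hall
    obtain ⟨l, hl⟩ := ann u w hw hall
    have hl0 : l ≠ 0 := by
      rintro rfl
      rw [zero_smul] at hl
      exact hu hl
    apply hadm l hl0
    calc w = (1 : ZMod 3) • w := (one_smul _ _).symm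
      _ = (l * l) • w := by rw [z3_sq l hl0]
      _ = l • (l • w) := mul_smul l l w
      _ = l • u := by rw [← hl]
  have h2 : ¬ ∀ g, u ⬝ᵥ g = 0 → w ⬝ᵥ g = 0 := by
    intro hall
    obtain ⟨l, hl⟩ := ann w u hu hall
    have hl0 : l ≠ 0 := by
      rintro rfl
      rw [zero_smul] at hl
      exact hw hl
    exact hadm l hl0 hl
  push_neg at h1 h2
  obtain ⟨g₁, hg₁w, hg₁u⟩ := h1
  obtain ⟨g₂, hg₂u, hg₂w⟩ := h2
  intro q
  refine ⟨(q.1 * (u ⬝ᵥ g₁)) • g₁ + (q.2 * (w ⬝ᵥ g₂)) • g₂, ?_, ?_⟩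
  · rw [dot_comb, hg₂u, mul_zero, add_zero, mul_assoc, z3_sq _ hg₁u, mul_one]
  · rw [dot_comb, hg₁w, mul_zero, zero_add, mul_assoc, z3_sq _ hg₂w, mul_one]

lemma cardVk (k : ℕ) : Fintype.card (Vk k) = 3 ^ k := by
  rw [Fintype.card_fun, ZMod.card, Fintype.card_fin]

lemma Scard {k : ℕ} (u w : Vk k) (hu : u ≠ 0) (hadm : ∀ l : ZMod 3, l ≠ 0 → w ≠ l • u) :
    81 * (univ.filter (Kpred u w)).card ≤ 25 * 9 ^ k := by
  classical
  have h9 : (3 : ℕ) ^ k * 3 ^ k = 9 ^ k := by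
    rw [← mul_pow]; norm_num
  rcases eq_or_ne w 0 with rfl | hw
  · -- w = 0
    have hKiff : ∀ p : Vk k × Vk k, Kpred u 0 p ↔ (u ⬝ᵥ p.1 = 0 ∧ u ⬝ᵥ p.2 = 0) := by
      intro p
      rw [Kpred_iff]
      constructor
      · rintro ⟨l, h1, h2⟩
        rw [zero_dotProduct, mul_zero] at h1 h2
        exact ⟨h1, h2⟩
      · rintro ⟨h1, h2⟩
        exact ⟨0, by simp [h1, h2]⟩
    have hprod : univ.filter (Kpred u (0 : Vk k)) =
        (univ.filter fun g : Vk k => u ⬝ᵥ g = 0) ×ˢ (univ.filter fun g : Vk k => u ⬝ᵥ g = 0) := by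
      ext p
      simp only [mem_filter, mem_univ, true_and, Finset.mem_product, hKiff]
    rw [hprod, Finset.card_product]
    set F := (univ.filter fun g : Vk k => u ⬝ᵥ g = 0).card with hFdef
    have hF : F * 3 = 3 ^ k := by
      have h := fiber_mul_card (fun g : Vk k => u ⬝ᵥ g)
        (fun x y => dotProduct_add u x y) (surj1 u hu) 0
      rw [ZMod.card, cardVk] at h
      exact h
    calc 81 * (F * F) = 9 * ((F * 3) * (F * 3)) := by ring
      _ = 9 * (3 ^ k * 3 ^ k) := by rw [hF]
      _ = 9 * 9 ^ k := by rw [h9]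
      _ ≤ 25 * 9 ^ k := Nat.mul_le_mul_right _ (by norm_num)
  · -- independent case
    set ψ : Vk k → ZMod 3 × ZMod 3 := fun g => (u ⬝ᵥ g, w ⬝ᵥ g) with hψ
    have hadd : ∀ x y, ψ (x + y) = ψ x + ψ y := by
      intro x y
      simp only [hψ, dotProduct_add, Prod.mk_add_mk]
    have hsurj : ∀ q, ∃ g, ψ g = q := by
      intro q
      obtain ⟨g, h1, h2⟩ := surj2 u w hu hw hadm q
      exact ⟨g, by rw [hψ]; exact Prod.ext h1 h2⟩
    have hfib : ∀ q, (univ.filter fun g => ψ g = q).card * 9 = 3 ^ k := by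
      intro q
      have h := fiber_mul_card ψ hadd hsurj q
      rw [Fintype.card_prod, ZMod.card, cardVk] at h
      simpa using h
    set B' : Finset ((ZMod 3 × ZMod 3) × (ZMod 3 × ZMod 3)) :=
      univ.filter (fun q => ∃ l : ZMod 3, q.1.1 = l * q.1.2 ∧ q.2.1 = l * q.2.2) with hB'
    have hmap : ∀ p ∈ univ.filter (Kpred u w), (ψ p.1, ψ p.2) ∈ B' := by
      intro p hp
      simp only [mem_filter, mem_univ, true_and] at hp
      obtain ⟨l, h1, h2⟩ := (Kpred_iff u w p).mp hp
      simp only [hB', mem_filter, mem_univ, true_and]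
      exact ⟨l, h1, h2⟩
    have hsum := Finset.card_eq_sum_card_fiberwise hmap
    have hterm : ∀ q ∈ B',
        81 * ((univ.filter (Kpred u w)).filter fun p => (ψ p.1, ψ p.2) = q).card ≤ 9 ^ k := by
      intro q _
      have hsubset : ((univ.filter (Kpred u w)).filter fun p => (ψ p.1, ψ p.2) = q) ⊆
          (univ.filter fun p : Vk k × Vk k => (ψ p.1, ψ p.2) = q) :=
        Finset.filter_subset_filter _ (Finset.filter_subset _ _)
      have hqprod : (univ.filter fun p : Vk k × Vk k => (ψ p.1, ψ p.2) = q) =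
          (univ.filter fun g : Vk k => ψ g = q.1) ×ˢ (univ.filter fun g : Vk k => ψ g = q.2) := by
        ext p
        simp only [mem_filter, mem_univ, true_and, Finset.mem_product, Prod.ext_iff]
      calc 81 * ((univ.filter (Kpred u w)).filter fun p => (ψ p.1, ψ p.2) = q).card
          ≤ 81 * (univ.filter fun p : Vk k × Vk k => (ψ p.1, ψ p.2) = q).card :=
            Nat.mul_le_mul_left _ (Finset.card_le_card hsubset)
        _ = ((univ.filter fun g : Vk k => ψ g = q.1).card * 9) *
            ((univ.filter fun g : Vk k => ψ g = q.2).card * 9) := by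
            rw [hqprod, Finset.card_product]; ring
        _ = 3 ^ k * 3 ^ k := by rw [hfib q.1, hfib q.2]
        _ = 9 ^ k := h9
    calc 81 * (univ.filter (Kpred u w)).card
        = ∑ q ∈ B', 81 * ((univ.filter (Kpred u w)).filter fun p => (ψ p.1, ψ p.2) = q).card := by
          rw [hsum, Finset.mul_sum]
      _ ≤ ∑ _q ∈ B', 9 ^ k := Finset.sum_le_sum hterm
      _ = 25 * 9 ^ k := by rw [Finset.sum_const, z3_B'card, smul_eq_mul]

/-- admissibility of a pair of message vectors -/
def adm {k : ℕ} (u w : Vk k) : Prop := u ≠ 0 ∧ ∀ l : ZMod 3, l ≠ 0 → w ≠ l • u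

lemma adm_neg_left {k : ℕ} {u w : Vk k} (h : adm u w) : adm (-u) w := by
  obtain ⟨h1, h2⟩ := h
  refine ⟨neg_ne_zero.mpr h1, fun l hl he => ?_⟩
  apply h2 (-l) (neg_ne_zero.mpr hl)
  rw [he, smul_neg, neg_smul]

lemma adm_neg_right {k : ℕ} {u w : Vk k} (h : adm u w) : adm u (-w) := by
  obtain ⟨h1, h2⟩ := h
  refine ⟨h1, fun l hl he => ?_⟩
  apply h2 (-l) (neg_ne_zero.mpr hl)
  rw [← neg_neg w, he, neg_smul]

lemma exists_good (k m : ℕ) (hnum : 9 ^ k * 25 ^ m ≤ 4 * 81 ^ m) :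
    ∃ ω : Fin m → Vk k × Vk k, ∀ u w : Vk k, adm u w → ∃ j, ¬ Kpred u w (ω j) := by
  classical
  by_contra hcon
  push_neg at hcon
  -- hcon : ∀ ω, ∃ u w, adm u w ∧ ∀ j, Kpred u w (ω j)
  set e : Vk k → ℕ := fun x => ((Fintype.equivFin (Vk k)) x : ℕ) with he
  have einj : Function.Injective e := fun x y h => by
    apply (Fintype.equivFin (Vk k)).injective
    exact Fin.ext h
  set rep : Vk k → Vk k := fun x => if e x ≤ e (-x) then x else -x with hrep
  have rep_or : ∀ x, rep x = x ∨ rep x = -x := by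
    intro x
    by_cases h : e x ≤ e (-x) <;> simp [hrep, h]
  have rep_neg : ∀ x, rep (-x) = rep x := by
    intro x
    rcases eq_or_ne x 0 with rfl | hx
    · rw [neg_zero]
    · have hne : e x ≠ e (-x) := fun h => (neg_ne_self hx) (einj h.symm)
      have hx1 : rep x = if e x ≤ e (-x) then x else -x := by rw [hrep]
      have hx2 : rep (-x) = if e (-x) ≤ e x then -x else x := by
        rw [hrep]; simp only [neg_neg]
      rcases lt_or_gt_of_ne hne with h | h
      · rw [hx1, hx2, if_pos (le_of_lt h), if_neg (not_le.mpr h)]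
      · rw [hx1, hx2, if_neg (not_le.mpr h), if_pos (le_of_lt h)]
  have rep_zero : rep 0 = 0 := by simp [hrep]
  have Kpred_rep : ∀ (u w : Vk k) (p), Kpred (rep u) (rep w) p ↔ Kpred u w p := by
    intro u w p
    rcases rep_or u with h1 | h1 <;> rcases rep_or w with h2 | h2 <;>
      rw [h1, h2] <;>
      simp only [Kpred_neg_left, Kpred_neg_right]
  have adm_rep : ∀ {u w : Vk k}, adm u w → adm (rep u) (rep w) := by
    intro u w h
    rcases rep_or u with h1 | h1 <;> rcases rep_or w with h2 | h2 <;> rw [h1, h2]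
    · exact h
    · exact adm_neg_right h
    · exact adm_neg_left h
    · exact adm_neg_left (adm_neg_right h)
  set Adm : Finset (Vk k × Vk k) := univ.filter (fun p => adm p.1 p.2) with hAdm
  set AdmP : Finset (Vk k × Vk k) := Adm.image (fun p => (rep p.1, rep p.2)) with hAdmP
  -- every ω is bad
  have hcover : (univ : Finset (Fin m → Vk k × Vk k)) ⊆
      AdmP.biUnion (fun p => univ.filter fun ω => ∀ j, Kpred p.1 p.2 (ω j)) := by
    intro ω _
    obtain ⟨u, w, hadm, hK⟩ := hcon ω
    rw [Finset.mem_biUnion]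
    refine ⟨(rep u, rep w), ?_, ?_⟩
    · rw [hAdmP]
      exact Finset.mem_image.mpr ⟨(u, w), by rw [hAdm, mem_filter]; exact ⟨mem_univ _, hadm⟩, rfl⟩
    · rw [mem_filter]
      exact ⟨mem_univ _, fun j => (Kpred_rep u w (ω j)).mpr (hK j)⟩
  -- cardinalities
  have cardΩ : Fintype.card (Fin m → Vk k × Vk k) = (9 ^ k) ^ m := by
    rw [Fintype.card_fun, Fintype.card_prod, cardVk, Fintype.card_fin]
    congr 1
    rw [← mul_pow]; norm_num
  -- bound on each bad set
  have hbad : ∀ p ∈ AdmP,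
      81 ^ m * (univ.filter fun ω : Fin m → Vk k × Vk k => ∀ j, Kpred p.1 p.2 (ω j)).card ≤
        25 ^ m * (9 ^ k) ^ m := by
    intro p hp
    have hadmp : adm p.1 p.2 := by
      rw [hAdmP] at hp
      obtain ⟨q, hq, rfl⟩ := Finset.mem_image.mp hp
      rw [hAdm, mem_filter] at hq
      exact adm_rep hq.2
    have hpi : (univ.filter fun ω : Fin m → Vk k × Vk k => ∀ j, Kpred p.1 p.2 (ω j)) =
        Fintype.piFinset (fun _ : Fin m => univ.filter (Kpred p.1 p.2)) := by
      ext ω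
      simp [Fintype.mem_piFinset]
    rw [hpi, Fintype.card_piFinset]
    rw [Finset.prod_const, Finset.card_univ, Fintype.card_fin]
    calc 81 ^ m * (univ.filter (Kpred p.1 p.2)).card ^ m
        = (81 * (univ.filter (Kpred p.1 p.2)).card) ^ m := by rw [mul_pow]
      _ ≤ (25 * 9 ^ k) ^ m := Nat.pow_le_pow_left (Scard p.1 p.2 hadmp.1 hadmp.2) m
      _ = 25 ^ m * (9 ^ k) ^ m := by rw [mul_pow]
  -- bound on card AdmP
  have hT : 4 * AdmP.card + 1 ≤ 9 ^ k := by
    set T1 : Finset (Vk k) := (univ.erase (0 : Vk k)).image rep with hT1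
    set T2 : Finset (Vk k) := insert 0 T1 with hT2
    have hsubTT : AdmP ⊆ T1 ×ˢ T2 := by
      intro p hp
      rw [hAdmP] at hp
      obtain ⟨q, hq, rfl⟩ := Finset.mem_image.mp hp
      rw [hAdm, mem_filter] at hq
      rw [Finset.mem_product]
      constructor
      · rw [hT1]
        exact Finset.mem_image_of_mem _ (Finset.mem_erase.mpr ⟨hq.2.1, mem_univ _⟩)
      · rcases eq_or_ne q.2 0 with h0 | h0
        · rw [hT2, h0, rep_zero]
          exact Finset.mem_insert_self _ _
        · rw [hT2]
          apply Finset.mem_insert_of_mem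
          rw [hT1]
          exact Finset.mem_image_of_mem _ (Finset.mem_erase.mpr ⟨h0, mem_univ _⟩)
    have h2T1 : 2 * T1.card ≤ 3 ^ k - 1 := by
      have hmapsto : ∀ x ∈ univ.erase (0 : Vk k), rep x ∈ T1 := by
        intro x hx
        rw [hT1]
        exact Finset.mem_image_of_mem _ hx
      have hfib := Finset.card_eq_sum_card_fiberwise hmapsto
      have hlow : ∀ b ∈ T1, 2 ≤ ((univ.erase (0 : Vk k)).filter fun x => rep x = b).card := by
        intro b hb
        rw [hT1] at hb
        obtain ⟨a, ha, rfl⟩ := Finset.mem_image.mp hb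
        have ha0 : a ≠ 0 := (Finset.mem_erase.mp ha).1
        have hpair : ({a, -a} : Finset (Vk k)) ⊆
            ((univ.erase (0 : Vk k)).filter fun x => rep x = rep a) := by
          intro x hx
          rw [Finset.mem_insert, Finset.mem_singleton] at hx
          rcases hx with rfl | rfl
          · rw [mem_filter]
            exact ⟨ha, rfl⟩
          · rw [mem_filter, Finset.mem_erase]
            exact ⟨⟨neg_ne_zero.mpr ha0, mem_univ _⟩, rep_neg a⟩
        have hcard2 : ({a, -a} : Finset (Vk k)).card = 2 := by
          rw [Finset.card_insert_of_notMem, Finset.card_singleton]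
          rw [Finset.mem_singleton]
          exact fun h => (neg_ne_self ha0) h.symm
        calc 2 = ({a, -a} : Finset (Vk k)).card := hcard2.symm
          _ ≤ _ := Finset.card_le_card hpair
      have : ∑ b ∈ T1, 2 ≤ ∑ b ∈ T1, ((univ.erase (0 : Vk k)).filter fun x => rep x = b).card :=
        Finset.sum_le_sum hlow
      rw [Finset.sum_const, smul_eq_mul] at this
      have hcarde : (univ.erase (0 : Vk k)).card = 3 ^ k - 1 := by
        rw [Finset.card_erase_of_mem (mem_univ _), Finset.card_univ, cardVk]
      calc 2 * T1.card = T1.card * 2 := by ring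
        _ ≤ (univ.erase (0 : Vk k)).card := by rw [hfib]; exact this
        _ = 3 ^ k - 1 := hcarde
    have hT2card : T2.card ≤ T1.card + 1 := by
      rw [hT2]
      exact (Finset.card_insert_le _ _).trans (by omega)
    have hAcard : AdmP.card ≤ T1.card * T2.card := by
      calc AdmP.card ≤ (T1 ×ˢ T2).card := Finset.card_le_card hsubTT
        _ = T1.card * T2.card := Finset.card_product _ _
    have h3k : 1 ≤ 3 ^ k := Nat.one_le_pow _ _ (by norm_num)
    have h9k : 3 ^ k * 3 ^ k = 9 ^ k := by rw [← mul_pow]; norm_num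
    have h2a : 2 * T1.card + 1 ≤ 3 ^ k := by omega
    have hfinal : 4 * (T1.card * (T1.card + 1)) + 1 ≤ 9 ^ k := by
      nlinarith [Nat.mul_le_mul h2a h2a, h9k]
    have hmono : T1.card * T2.card ≤ T1.card * (T1.card + 1) :=
      Nat.mul_le_mul_left _ hT2card
    have : AdmP.card ≤ T1.card * (T1.card + 1) := hAcard.trans hmono
    omega
  -- assemble the contradiction
  have hchain : 4 * (81 ^ m * (9 ^ k) ^ m) ≤ (9 ^ k - 1) * (25 ^ m * (9 ^ k) ^ m) := by
    have h1 : Fintype.card (Fin m → Vk k × Vk k) ≤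
        ∑ p ∈ AdmP, (univ.filter fun ω : Fin m → Vk k × Vk k => ∀ j, Kpred p.1 p.2 (ω j)).card := by
      rw [← Finset.card_univ]
      exact (Finset.card_le_card hcover).trans Finset.card_biUnion_le
    have h2 : 81 ^ m * Fintype.card (Fin m → Vk k × Vk k) ≤ AdmP.card * (25 ^ m * (9 ^ k) ^ m) := by
      calc 81 ^ m * Fintype.card (Fin m → Vk k × Vk k)
          ≤ 81 ^ m * ∑ p ∈ AdmP, (univ.filter
              fun ω : Fin m → Vk k × Vk k => ∀ j, Kpred p.1 p.2 (ω j)).card :=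
            Nat.mul_le_mul_left (81 ^ m) h1
        _ = ∑ p ∈ AdmP, 81 ^ m * (univ.filter
              fun ω : Fin m → Vk k × Vk k => ∀ j, Kpred p.1 p.2 (ω j)).card := Finset.mul_sum _ _ _
        _ ≤ ∑ _p ∈ AdmP, 25 ^ m * (9 ^ k) ^ m := Finset.sum_le_sum hbad
        _ = AdmP.card * (25 ^ m * (9 ^ k) ^ m) := by rw [Finset.sum_const, smul_eq_mul]
    rw [cardΩ] at h2
    have hT9 : 4 * AdmP.card ≤ 9 ^ k - 1 := Nat.le_sub_one_of_lt hT
    calc 4 * (81 ^ m * (9 ^ k) ^ m) ≤ 4 * (AdmP.card * (25 ^ m * (9 ^ k) ^ m)) :=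
          Nat.mul_le_mul_left 4 h2
      _ = (4 * AdmP.card) * (25 ^ m * (9 ^ k) ^ m) := by ring
      _ ≤ (9 ^ k - 1) * (25 ^ m * (9 ^ k) ^ m) := Nat.mul_le_mul_right _ hT9
  -- but (9^k - 1) * 25^m < 4 * 81^m
  have h3k : 1 ≤ 9 ^ k := Nat.one_le_pow _ _ (by norm_num)
  have h25 : 1 ≤ 25 ^ m := Nat.one_le_pow _ _ (by norm_num)
  have hlt : (9 ^ k - 1) * 25 ^ m < 4 * 81 ^ m := by
    calc (9 ^ k - 1) * 25 ^ m = 9 ^ k * 25 ^ m - 25 ^ m := by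
          rw [Nat.sub_mul, one_mul]
      _ < 9 ^ k * 25 ^ m := by
          have : 25 ^ m ≤ 9 ^ k * 25 ^ m := Nat.le_mul_of_pos_left _ (by positivity)
          omega
      _ ≤ 4 * 81 ^ m := hnum
  have hpos : 0 < (9 ^ k) ^ m := by positivity
  have : 4 * (81 ^ m * (9 ^ k) ^ m) < 4 * (81 ^ m * (9 ^ k) ^ m) := by
    calc 4 * (81 ^ m * (9 ^ k) ^ m) ≤ (9 ^ k - 1) * (25 ^ m * (9 ^ k) ^ m) := hchain
      _ = ((9 ^ k - 1) * 25 ^ m) * (9 ^ k) ^ m := by ring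
      _ < (4 * 81 ^ m) * (9 ^ k) ^ m := (Nat.mul_lt_mul_right hpos).mpr hlt
      _ = 4 * (81 ^ m * (9 ^ k) ^ m) := by ring
  exact lt_irrefl _ this

lemma aux_rpow_le : ((81 : ℝ) / 25) ^ ((3 : ℝ) / 4) ≤ 4 := by
  have h0 : (0 : ℝ) ≤ ((81 : ℝ) / 25) ^ ((3 : ℝ) / 4) := Real.rpow_nonneg (by norm_num) _
  have h4 : (((81 : ℝ) / 25) ^ ((3 : ℝ) / 4)) ^ (4 : ℕ) = ((81 : ℝ) / 25) ^ (3 : ℕ) := by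
    rw [← Real.rpow_natCast (((81 : ℝ) / 25) ^ ((3 : ℝ) / 4)) 4, ← Real.rpow_mul (by norm_num)]
    norm_num
  apply le_of_pow_le_pow_left₀ (n := 4) (by norm_num) (by norm_num)
  rw [h4]
  norm_num

lemma numeric1 (n : ℕ) :
    9 ^ (⌊(n : ℝ) * Real.logb 3 (81 / 25) / 8⌋₊) * 25 ^ (n / 4) ≤ 4 * 81 ^ (n / 4) := by
  set L : ℝ := Real.logb 3 (81 / 25) with hLdef
  set k : ℕ := ⌊(n : ℝ) * L / 8⌋₊ with hkdef
  set m : ℕ := n / 4 with hmdef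
  have hL0 : 0 ≤ L := Real.logb_nonneg (by norm_num) (by norm_num)
  have h3L : (3 : ℝ) ^ L = 81 / 25 := Real.rpow_logb (by norm_num) (by norm_num) (by norm_num)
  have hk : (k : ℝ) ≤ (n : ℝ) * L / 8 := Nat.floor_le (by positivity)
  have hn : (n : ℝ) ≤ 4 * (m : ℝ) + 3 := by
    have h1 : n ≤ 4 * m + 3 := by omega
    exact_mod_cast h1
  -- 9^k as rpow
  have h9k : ((9 : ℝ)) ^ (k : ℕ) = (3 : ℝ) ^ ((2 * k : ℕ) : ℝ) := by
    rw [Real.rpow_natCast, pow_mul]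
    norm_num
  have hexp : ((2 * k : ℕ) : ℝ) ≤ (m : ℝ) * L + (3 / 4) * L := by
    push_cast
    have h1 : 2 * (k : ℝ) ≤ (n : ℝ) * L / 4 := by linarith
    have h2 : (n : ℝ) * L ≤ (4 * (m : ℝ) + 3) * L := mul_le_mul_of_nonneg_right hn hL0
    nlinarith
  have hmono : (3 : ℝ) ^ ((2 * k : ℕ) : ℝ) ≤ (3 : ℝ) ^ ((m : ℝ) * L + (3 / 4) * L) :=
    Real.rpow_le_rpow_of_exponent_le (by norm_num) hexp
  have hsplit : (3 : ℝ) ^ ((m : ℝ) * L + (3 / 4) * L) =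
      ((81 : ℝ) / 25) ^ (m : ℕ) * ((81 : ℝ) / 25) ^ ((3 : ℝ) / 4) := by
    rw [Real.rpow_add (by norm_num)]
    congr 1
    · rw [mul_comm, Real.rpow_mul (by norm_num : (0:ℝ) ≤ 3), h3L, Real.rpow_natCast]
    · rw [mul_comm, Real.rpow_mul (by norm_num : (0:ℝ) ≤ 3), h3L]
  have hreal : ((9 : ℝ)) ^ (k : ℕ) * 25 ^ (m : ℕ) ≤ 4 * 81 ^ (m : ℕ) := by
    have hb : ((9 : ℝ)) ^ (k : ℕ) ≤ ((81 : ℝ) / 25) ^ (m : ℕ) * 4 := by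
      rw [h9k]
      refine hmono.trans ?_
      rw [hsplit]
      exact mul_le_mul_of_nonneg_left aux_rpow_le (by positivity)
    have h25pos : (0 : ℝ) < 25 ^ (m : ℕ) := by positivity
    calc ((9 : ℝ)) ^ (k : ℕ) * 25 ^ (m : ℕ) ≤ (((81 : ℝ) / 25) ^ (m : ℕ) * 4) * 25 ^ (m : ℕ) :=
          mul_le_mul_of_nonneg_right hb (le_of_lt h25pos)
      _ = 4 * (((81 : ℝ) / 25) ^ (m : ℕ) * 25 ^ (m : ℕ)) := by ring
      _ = 4 * 81 ^ (m : ℕ) := by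
          rw [div_pow, div_mul_cancel₀]
          positivity
  exact_mod_cast hreal

lemma numeric2 (n : ℕ) :
    (1 / 3 : ℝ) * (9 / 5 : ℝ) ^ ((n : ℝ) / 4) ≤
      (3 : ℝ) ^ (⌊(n : ℝ) * Real.logb 3 (81 / 25) / 8⌋₊ : ℕ) := by
  set L : ℝ := Real.logb 3 (81 / 25) with hLdef
  set k : ℕ := ⌊(n : ℝ) * L / 8⌋₊ with hkdef
  have hlog2 : L = 2 * Real.logb 3 (9 / 5) := by
    rw [hLdef, show (81 : ℝ) / 25 = (9 / 5 : ℝ) ^ (2 : ℕ) by norm_num, Real.logb_pow]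
    norm_num
  have h95 : (3 : ℝ) ^ Real.logb 3 (9 / 5) = 9 / 5 :=
    Real.rpow_logb (by norm_num) (by norm_num) (by norm_num)
  have hfloor : (n : ℝ) * L / 8 < (k : ℝ) + 1 := Nat.lt_floor_add_one _
  have hexp : ((n : ℝ) / 4) * Real.logb 3 (9 / 5) ≤ ((k : ℕ) : ℝ) + 1 := by
    have : (n : ℝ) * L / 8 = ((n : ℝ) / 4) * Real.logb 3 (9 / 5) := by
      rw [hlog2]; ring
    linarith [hfloor, this.symm.le]
  have hrw : (9 / 5 : ℝ) ^ ((n : ℝ) / 4) = (3 : ℝ) ^ (((n : ℝ) / 4) * Real.logb 3 (9 / 5)) := by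
    rw [mul_comm, Real.rpow_mul (by norm_num : (0:ℝ) ≤ 3), h95]
  have hmono : (3 : ℝ) ^ (((n : ℝ) / 4) * Real.logb 3 (9 / 5)) ≤ (3 : ℝ) ^ (((k : ℝ)) + 1) :=
    Real.rpow_le_rpow_of_exponent_le (by norm_num) hexp
  have hpow : (3 : ℝ) ^ (((k : ℝ)) + 1) = 3 * (3 : ℝ) ^ (k : ℕ) := by
    rw [show ((k : ℝ) + 1) = (((k + 1 : ℕ)) : ℝ) by push_cast; ring, Real.rpow_natCast, pow_succ]
    ring
  calc (1 / 3 : ℝ) * (9 / 5 : ℝ) ^ ((n : ℝ) / 4)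
      ≤ (1 / 3 : ℝ) * (3 * (3 : ℝ) ^ (k : ℕ)) := by
        rw [hrw]
        have := hmono.trans_eq hpow
        nlinarith [this]
    _ = (3 : ℝ) ^ (k : ℕ) := by ring

end LinTriffAux

open LinTriffAux in
/-- For every `n ≥ 1` there is a linear trifferent code `C ⊆ 𝔽_3^n` of size at least
`(1/3)(9/5)^(n/4)`; moreover `C` can be taken of dimension exactly
`k = ⌊n log₃(81/25)/8⌋`. -/
theorem linear_trifferent_lower (n : ℕ) (hn : 1 ≤ n) :
    ∃ C : Submodule (ZMod 3) (Fin n → ZMod 3),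
      (∀ x ∈ C, ∀ y ∈ C, ∀ z ∈ C, x ≠ y → y ≠ z → x ≠ z →
        ∃ i : Fin n, ({x i, y i, z i} : Set (ZMod 3)) = Set.univ) ∧
      Module.finrank (ZMod 3) C = ⌊(n : ℝ) * Real.logb 3 (81 / 25) / 8⌋₊ ∧
      (1 / 3 : ℝ) * (9 / 5 : ℝ) ^ ((n : ℝ) / 4) ≤ (Nat.card C : ℝ) := by
  classical
  set k : ℕ := ⌊(n : ℝ) * Real.logb 3 (81 / 25) / 8⌋₊ with hkdef
  set m : ℕ := n / 4 with hmdef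
  obtain ⟨ω, hω⟩ := exists_good k m (by rw [hkdef, hmdef]; exact numeric1 n)
  set colf : Vk k × Vk k → ℕ → Vk k := fun p a =>
    if a = 0 then p.1 else if a = 1 then p.2 else if a = 2 then p.1 + p.2
    else p.1 + (2 : ZMod 3) • p.2 with hcolf
  have h4m : 4 * m ≤ n := by omega
  set ω' : ℕ → Vk k × Vk k := fun jj => if h : jj < m then ω ⟨jj, h⟩ else (0, 0) with hω'
  set col : Fin n → Vk k := fun i =>
    if (i : ℕ) < 4 * m then colf (ω' ((i : ℕ) / 4)) ((i : ℕ) % 4) else 0 with hcol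
  set M : Vk k →ₗ[ZMod 3] (Fin n → ZMod 3) :=
    { toFun := fun u i => u ⬝ᵥ col i
      map_add' := by
        intro x y
        funext i
        exact add_dotProduct x y (col i)
      map_smul' := by
        intro c x
        funext i
        simp [smul_dotProduct] } with hM
  have hMapply : ∀ (u : Vk k) (i : Fin n), M u i = u ⬝ᵥ col i := fun u i => rfl
  have CONV : ∀ u w : Vk k, adm u w → ∃ i : Fin n, u ⬝ᵥ col i ≠ 0 ∧ w ⬝ᵥ col i = 0 := by
    intro u w hadm
    obtain ⟨j, hj⟩ := hω u w hadm
    unfold Kpred at hj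
    push_neg at hj
    obtain ⟨s, t, hst, h0, hne⟩ := hj
    obtain ⟨ee, hee, hcases⟩ := z3_proj s t (fun hc => hst hc.1 hc.2)
    have key : ∃ a : ℕ, a < 4 ∧ s • (ω j).1 + t • (ω j).2 = ee • colf (ω j) a := by
      rcases hcases with ⟨hs, ht⟩ | ⟨hs, ht⟩ | ⟨hs, ht⟩ | ⟨hs, ht⟩
      · refine ⟨0, by norm_num, ?_⟩
        rw [hs, ht, zero_smul, add_zero]
        simp [hcolf]
      · refine ⟨1, by norm_num, ?_⟩
        rw [hs, ht, zero_smul, zero_add]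
        simp [hcolf]
      · refine ⟨2, by norm_num, ?_⟩
        rw [hs, ht]
        simp [hcolf, smul_add]
      · refine ⟨3, by norm_num, ?_⟩
        have hc3 : colf (ω j) 3 = (ω j).1 + (2 : ZMod 3) • (ω j).2 := by
          simp [hcolf]
        rw [hs, ht, hc3, smul_add, smul_smul]
    obtain ⟨a, ha4, hid⟩ := key
    have hjm : (j : ℕ) < m := j.isLt
    have hj4 : 4 * (j : ℕ) + a < n := by omega
    have hlt : 4 * (j : ℕ) + a < 4 * m := by omega
    have hdiv : (4 * (j : ℕ) + a) / 4 = (j : ℕ) := by omega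
    have hmod : (4 * (j : ℕ) + a) % 4 = a := by omega
    have hω'j : ω' (j : ℕ) = ω j := by
      simp only [hω']
      rw [dif_pos j.isLt, Fin.eta]
    have hcoli : col ⟨4 * (j : ℕ) + a, hj4⟩ = colf (ω j) a := by
      simp only [hcol, Fin.val_mk]
      rw [if_pos hlt, hdiv, hmod, hω'j]
    refine ⟨⟨4 * (j : ℕ) + a, hj4⟩, ?_, ?_⟩
    · rw [hcoli]
      intro hzero
      apply hne
      rw [hid, dotProduct_smul, smul_eq_mul, hzero, mul_zero]
    · rw [hcoli]
      rw [hid, dotProduct_smul, smul_eq_mul] at h0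
      rcases mul_eq_zero.mp h0 with h | h
      · exact absurd h hee
      · exact h
  have hinj : Function.Injective M := by
    intro x y hxy
    by_contra hne'
    have hd : x - y ≠ 0 := sub_ne_zero.mpr hne'
    have hadm : adm (x - y) 0 := ⟨hd, fun l hl he => z3_smul_ne_zero hl hd he.symm⟩
    obtain ⟨i, hi, _⟩ := CONV (x - y) 0 hadm
    apply hi
    have hzero : M (x - y) = 0 := by rw [map_sub, hxy, sub_self]
    calc (x - y) ⬝ᵥ col i = M (x - y) i := (hMapply _ _).symm
      _ = 0 := by rw [hzero]; rfl
  refine ⟨LinearMap.range M, ?_, ?_, ?_⟩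
  · intro x hx y hy z hz hxy hyz hxz
    obtain ⟨ux, hux⟩ := LinearMap.mem_range.mp hx
    obtain ⟨uy, huy⟩ := LinearMap.mem_range.mp hy
    obtain ⟨uz, huz⟩ := LinearMap.mem_range.mp hz
    set s := ux - uz with hsdef
    set t := uy - uz with htdef
    have hMs : M s = x - z := by rw [hsdef, map_sub, hux, huz]
    have hMt : M t = y - z := by rw [htdef, map_sub, huy, huz]
    have hs0 : s ≠ 0 := by
      intro h
      apply hxz
      have h2 : M s = 0 := by rw [h, map_zero]
      rw [hMs] at h2
      exact sub_eq_zero.mp h2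
    have hadm : adm s (s + t) := by
      refine ⟨hs0, fun l hl he => ?_⟩
      rcases z3_ne0 l hl with rfl | rfl
      · rw [one_smul] at he
        have ht0 : t = 0 := by
          have := he
          rwa [add_eq_left] at this
        apply hyz
        have h2 : M t = 0 := by rw [ht0, map_zero]
        rw [hMt] at h2
        exact (sub_eq_zero.mp h2)
      · have hts : t = s := by
          rw [two_smul] at he
          exact add_left_cancel he
        apply hxy
        have h2 : M t = M s := by rw [hts]
        rw [hMt, hMs] at h2
        exact (sub_left_inj.mp h2).symm
    obtain ⟨i, hi1, hi2⟩ := CONV s (s + t) hadm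
    have hv1 : s ⬝ᵥ col i = x i - z i := by
      have h2 : M s i = (x - z) i := by rw [hMs]
      rw [hMapply] at h2
      rw [h2, Pi.sub_apply]
    have hv2 : (s + t) ⬝ᵥ col i = (x i - z i) + (y i - z i) := by
      have h2 : M (s + t) i = ((x - z) + (y - z)) i := by rw [map_add, hMs, hMt]
      rw [hMapply] at h2
      rw [h2, Pi.add_apply, Pi.sub_apply, Pi.sub_apply]
    rw [hv1] at hi1
    rw [hv2] at hi2
    have htrip := z3_triple (x i) (y i) (z i) hi1 hi2
    refine ⟨i, ?_⟩
    apply Set.eq_univ_of_forall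
    intro d
    rcases htrip d with h | h | h <;> simp [h]
  · have e := LinearEquiv.ofInjective M hinj
    rw [← LinearEquiv.finrank_eq e, hkdef]
    rw [Module.finrank_pi]
    rw [Fintype.card_fin]
  · have hcard : Nat.card (LinearMap.range M) = 3 ^ k := by
      rw [← Nat.card_congr (LinearEquiv.ofInjective M hinj).toEquiv]
      rw [Nat.card_eq_fintype_card, cardVk]
    rw [hcard]
    push_cast
    rw [hkdef]
    exact numeric2 n
end
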